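/- arXiv:2512.24689 — 8 statements merged into one kernel-verified Lean document; each statement's English description precedes it below -/
import Mathlib

section
/- Let q be a prime power and h ≥ 2. The set L = {(x : Tr(x) : y) : x ∈ F_{q^h}, y ∈ F_q, (x,y) ≠ (0,0)} of points in PG(2, q^h), where Tr = Tr_{q^h/q}, has exactly q^h + q^{h-1} + 1 elements. -/
/-- The relative trace `x ↦ x + x^q + ⋯ + x^{q^{h-1}}`. -/
def Tr (q h : ℕ) {K : Type*} [Field K] (x : K) : K :=
  ∑ i ∈ Finset.range h, x ^ q ^ i

/-- The line of `PG(2, K)` with equation `a 0 * X + a 1 * Y + a 2 * Z = 0`. -/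
def projLine {K : Type*} [Field K] (a : Fin 3 → K) :
    Set (Projectivization K (Fin 3 → K)) :=
  {P | ∑ i, a i * P.rep i = 0}

/-- A subset of `PG(2, K)` is a line if it is `projLine a` for some nonzero `a`. -/
def IsLine {K : Type*} [Field K] (ℓ : Set (Projectivization K (Fin 3 → K))) : Prop :=
  ∃ a : Fin 3 → K, a ≠ 0 ∧ ℓ = projLine a

/-- The trace-construction point set
`{(x : Tr(x) : y) : x ∈ F_{q^h}, y ∈ F_q, (x,y) ≠ (0,0)}` in `PG(2, q^h)`. -/
def traceSet (q h : ℕ) (F K : Type*) [Field F] [Field K] [Algebra F K] :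
    Set (Projectivization K (Fin 3 → K)) :=
  {P | ∃ (x : K) (y : F), (x ≠ 0 ∨ y ≠ 0) ∧
    ∃ hv : (![x, Tr q h x, algebraMap F K y] : Fin 3 → K) ≠ 0,
      P = Projectivization.mk K (![x, Tr q h x, algebraMap F K y]) hv}

/-
`Tr` is the field trace `K → F` followed by `F ↪ K`, so it suffices to count the points
`(x : t x : y)` for a nonzero `F`-linear functional `t`. Normalising `y = 1` when `y ≠ 0` and
`t x = 1` when `y = 0 ≠ t x` shows these points are exactly `(z : t z : 1)` for `z ∈ K`,
`(w : 1 : 0)` for `w` in the coset `t⁻¹(1)` of `ker t`, and `(1 : 0 : 0)`, which occurs because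
`ker t ≠ 0` once `h ≥ 2`. This gives `q^h + q^(h-1) + 1` distinct points.
-/

open Module (Dual finrank)
open Projectivization
open scoped LinearAlgebra.Projectivization

lemma Function.Surjective.natCard_fiber_eq_natCard_ker {R M N : Type*} [Semiring R]
    [AddCommGroup M] [AddCommGroup N] [Module R M] [Module R N] {f : M →ₗ[R] N}
    (hf : Function.Surjective f) (c : N) :
    Nat.card {x : M // f x = c} = Nat.card (LinearMap.ker f) := by
  obtain ⟨x₁, rfl⟩ := hf c
  exact Nat.card_congr
    { toFun := fun x => ⟨x - x₁, by simp [x.2]⟩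
      invFun := fun k => ⟨k + x₁, by simp⟩
      left_inv := fun x => by simp
      right_inv := fun k => by simp }

namespace Projectivization

variable {K ι : Type*} [Field K] {v w : ι → K} {i : ι}

lemma mk_eq_mk_iff_of_apply_eq_one (hv : v ≠ 0) (hw : w ≠ 0) (hvi : v i = 1) (hwi : w i = 1) :
    mk K v hv = mk K w hw ↔ v = w := by
  refine ⟨fun h => ?_, fun h => by subst h; rfl⟩
  obtain ⟨a, rfl⟩ := (mk_eq_mk_iff' K _ _ hv hw).1 h
  obtain rfl : a = 1 := by simpa [hwi] using hvi
  exact one_smul K w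

lemma mk_ne_mk_of_apply_eq_zero (hv : v ≠ 0) (hw : w ≠ 0) (hvi : v i = 0) (hwi : w i ≠ 0) :
    mk K v hv ≠ mk K w hw := by
  intro h
  obtain ⟨a, rfl⟩ := (mk_eq_mk_iff K _ _ hv hw).1 h
  exact hwi ((smul_eq_zero_iff_eq a).1 (by simpa using hvi))

end Projectivization

section DualPoints

variable {F K : Type*} [Field F] [Field K] [Algebra F K]

def functionalPointSet (t : Dual F K) : Set (ℙ K (Fin 3 → K)) :=
  {P | ∃ (x : K) (y : F), (x ≠ 0 ∨ y ≠ 0) ∧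
    ∃ hv : (![x, algebraMap F K (t x), algebraMap F K y] : Fin 3 → K) ≠ 0,
      P = mk K ![x, algebraMap F K (t x), algebraMap F K y] hv}

def functionalPointParam (t : Dual F K) : K ⊕ Option {w : K // t w = 1} → ℙ K (Fin 3 → K)
  | .inl z => mk K ![z, algebraMap F K (t z), 1] (Function.ne_iff.2 ⟨2, by simp⟩)
  | .inr (some w) => mk K ![w, 1, 0] (Function.ne_iff.2 ⟨1, by simp⟩)
  | .inr none => mk K ![1, 0, 0] (Function.ne_iff.2 ⟨0, by simp⟩)

lemma functionalPointParam_injective (t : Dual F K) :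
    Function.Injective (functionalPointParam t) := by
  -- the three kinds of points are told apart by which of the last two coordinates vanish
  rintro (z | _ | w) (z' | _ | w') h <;> simp only [functionalPointParam] at h
  · simpa using congrFun ((mk_eq_mk_iff_of_apply_eq_one _ _ (i := 2) (by simp) (by simp)).1 h) 0
  · exact (mk_ne_mk_of_apply_eq_zero _ _ (i := 2) (by simp) (by simp) h.symm).elim
  · exact (mk_ne_mk_of_apply_eq_zero _ _ (i := 2) (by simp) (by simp) h.symm).elim
  · exact (mk_ne_mk_of_apply_eq_zero _ _ (i := 2) (by simp) (by simp) h).elim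
  · rfl
  · exact (mk_ne_mk_of_apply_eq_zero _ _ (i := 1) (by simp) (by simp) h).elim
  · exact (mk_ne_mk_of_apply_eq_zero _ _ (i := 2) (by simp) (by simp) h).elim
  · exact (mk_ne_mk_of_apply_eq_zero _ _ (i := 1) (by simp) (by simp) h.symm).elim
  · have := (mk_eq_mk_iff_of_apply_eq_one _ _ (i := 1) (by simp) (by simp)).1 h
    simpa [Subtype.ext_iff] using congrFun this 0

lemma range_functionalPointParam {t : Dual F K} {x₀ : K} (hx₀ : x₀ ≠ 0)
    (htx₀ : t x₀ = 0) :
    Set.range (functionalPointParam t) = functionalPointSet t := by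
  ext P
  constructor
  · rintro ⟨z | _ | w, rfl⟩
    · exact ⟨z, 1, Or.inr one_ne_zero, Function.ne_iff.2 ⟨2, by simp⟩,
        by simp [functionalPointParam]⟩
    · refine ⟨x₀, 0, Or.inl hx₀, Function.ne_iff.2 ⟨0, by simpa using hx₀⟩, ?_⟩
      refine (mk_eq_mk_iff' K _ _ _ _).2 ⟨x₀⁻¹, ?_⟩
      ext i; fin_cases i <;> simp [htx₀, hx₀]
    · have hw : (w : K) ≠ 0 := fun h => by simpa [h] using w.2
      exact ⟨w, 0, Or.inl hw, Function.ne_iff.2 ⟨0, by simpa using hw⟩,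
        by simp [functionalPointParam, w.2]⟩
  · rintro ⟨x, y, hxy, hv, rfl⟩
    by_cases hy : y = 0
    · subst hy
      by_cases hx : t x = 0
      · refine ⟨.inr none, (mk_eq_mk_iff' K _ _ _ _).2 ⟨x⁻¹, ?_⟩⟩
        ext i; fin_cases i <;> simp_all
      · refine ⟨.inr (some ⟨(t x)⁻¹ • x, by simp [hx]⟩),
          (mk_eq_mk_iff' K _ _ _ _).2 ⟨(algebraMap F K (t x))⁻¹, ?_⟩⟩
        ext i; fin_cases i <;> simp [hx, Algebra.smul_def]
    · refine ⟨.inl (y⁻¹ • x), (mk_eq_mk_iff' K _ _ _ _).2 ⟨algebraMap F K y⁻¹, ?_⟩⟩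
      rw [map_smul]
      ext i; fin_cases i <;> simp [hy, Algebra.smul_def]

lemma exists_ne_zero_apply_eq_zero [FiniteDimensional F K] {t : Dual F K} (ht : t ≠ 0)
    (hK : 2 ≤ finrank F K) : ∃ x ≠ 0, t x = 0 := by
  have hker : 0 < finrank F (LinearMap.ker t) := by
    have := t.finrank_ker_add_one_of_ne_zero ht
    omega
  obtain ⟨⟨x, hx⟩, hx0⟩ := Module.finrank_pos_iff_exists_ne_zero.1 hker
  exact ⟨x, by simpa using hx0, hx⟩

lemma natCard_ker_of_ne_zero [Finite K] {t : Dual F K} (ht : t ≠ 0) :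
    Nat.card (LinearMap.ker t) = Nat.card F ^ (finrank F K - 1) := by
  rw [Module.natCard_eq_pow_finrank (K := F), ← t.finrank_ker_add_one_of_ne_zero ht,
    Nat.add_sub_cancel]

theorem ncard_functionalPointSet [Finite K] {t : Dual F K} (ht : t ≠ 0) (hK : 2 ≤ finrank F K) :
    (functionalPointSet t).ncard =
      Nat.card F ^ finrank F K + Nat.card F ^ (finrank F K - 1) + 1 := by
  obtain ⟨x₀, hx₀, htx₀⟩ := exists_ne_zero_apply_eq_zero ht hK
  rw [← range_functionalPointParam hx₀ htx₀, ← Nat.card_coe_set_eq,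
    Nat.card_range_of_injective (functionalPointParam_injective t), Nat.card_sum,
    Finite.card_option,
    (LinearMap.surjective ht).natCard_fiber_eq_natCard_ker, natCard_ker_of_ne_zero ht,
    Module.natCard_eq_pow_finrank (K := F), add_assoc]

end DualPoints

lemma Tr_eq_algebraMap_trace {F K : Type*} [Field F] [Field K] [Algebra F K] [Finite K]
    (x : K) : Tr (Nat.card F) (finrank F K) x = algebraMap F K (Algebra.trace F K x) :=
  (FiniteField.algebraMap_trace_eq_sum_pow F K x).symm

lemma traceSet_eq_functionalPointSet {F K : Type*} [Field F] [Field K] [Algebra F K] [Finite K] :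
    traceSet (Nat.card F) (finrank F K) F K = functionalPointSet (Algebra.trace F K) := by
  simp only [traceSet, functionalPointSet, Tr_eq_algebraMap_trace]

theorem stmt_2_general {F K : Type*} [Field F] [Field K] [Algebra F K]
    [Fintype F] [Fintype K]
    (q h : ℕ) (hcard : Fintype.card F = q)
    (hh : 2 ≤ h) (hrank : Module.finrank F K = h) :
    (traceSet q h F K).ncard = q ^ h + q ^ (h - 1) + 1 := by
  subst hcard hrank
  rw [← Nat.card_eq_fintype_card, traceSet_eq_functionalPointSet,
    ncard_functionalPointSet (Algebra.trace_ne_zero F K) hh]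

/-- The trace construction has exactly `q^h + q^(h-1) + 1` points. -/
theorem stmt_2 {F K : Type*} [Field F] [Field K] [Algebra F K]
    [Fintype F] [Fintype K]
    (q h : ℕ) (hq : IsPrimePow q) (hcard : Fintype.card F = q)
    (hh : 2 ≤ h) (hrank : Module.finrank F K = h) :
    (traceSet q h F K).ncard = q ^ h + q ^ (h - 1) + 1 :=
  stmt_2_general q h hcard hh hrank
end

section
/- Let q be a prime power, h ≥ 2, and L = {(x : Tr(x) : y) : x ∈ F_{q^h}, y ∈ F_q, (x,y) ≠ (0,0)} ⊆ PG(2, q^h). Then L is a blocking set: every line of PG(2, q^h) contains at least one point of L. -/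
/-!
For `q = |F|` each power `x ↦ x ^ q ^ i` is the `i`-th iterate of the `F`-linear Frobenius of `K`,
so `Tr` is `F`-linear, and so is `(x, y) ↦ a₀ x + a₁ Tr x + a₂ y` from `K × F` to `K`. The source
has dimension one more than the target, so this map has a nonzero kernel element `(x, y)`, and
`(x : Tr x : y)` is then a point of the trace set on the line.
-/

open Projectivization

theorem mk_mem_projLine_iff {K : Type*} [Field K] (a : Fin 3 → K) (v : Fin 3 → K)
    (hv : v ≠ 0) : mk K v hv ∈ projLine a ↔ ∑ i, a i * v i = 0 := by
  obtain ⟨c, hc⟩ := exists_smul_eq_mk_rep K v hv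
  simp only [projLine, Set.mem_ofPred_eq, ← hc, Pi.smul_apply, Units.smul_def, smul_eq_mul,
    mul_left_comm _ (c : K), ← Finset.mul_sum, c.mul_right_eq_zero]

section FiniteField

variable (F K : Type*) [Field F] [Fintype F] [Field K] [Algebra F K]

def traceLinearMap (h : ℕ) : K →ₗ[F] K :=
  ∑ i ∈ Finset.range h, (FiniteField.frobeniusAlgHom F K ^ i).toLinearMap

theorem traceLinearMap_apply (h : ℕ) (x : K) :
    traceLinearMap F K h x = Tr (Fintype.card F) h x := by
  simp [traceLinearMap, Tr, LinearMap.sum_apply, AlgHom.coe_pow,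
    FiniteField.coe_frobeniusAlgHom, pow_iterate]

def traceLineForm (h : ℕ) (a : Fin 3 → K) : K × F →ₗ[F] K :=
  a 0 • LinearMap.fst F K F + a 1 • (traceLinearMap F K h ∘ₗ LinearMap.fst F K F) +
    a 2 • (Algebra.linearMap F K ∘ₗ LinearMap.snd F K F)

theorem traceLineForm_apply (h : ℕ) (a : Fin 3 → K) (x : K) (y : F) :
    traceLineForm F K h a (x, y) =
      a 0 * x + a 1 * Tr (Fintype.card F) h x + a 2 * algebraMap F K y := by
  simp [traceLineForm, traceLinearMap_apply]

theorem exists_ne_zero_traceLineForm_eq_zero [Finite K] (h : ℕ) (a : Fin 3 → K) :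
    ∃ v : K × F, v ≠ 0 ∧ traceLineForm F K h a v = 0 := by
  have : Module.Finite F K := Module.Finite.of_finite
  have hker : LinearMap.ker (traceLineForm F K h a) ≠ ⊥ :=
    LinearMap.ker_ne_bot_of_finrank_lt <| by simp [Module.finrank_prod]
  obtain ⟨v, hv, hv0⟩ := (Submodule.ne_bot_iff _).1 hker
  exact ⟨v, hv0, hv⟩

end FiniteField

theorem stmt_3_general {F K : Type*} [Field F] [Field K] [Algebra F K]
    [Fintype F] [Fintype K]
    (q h : ℕ) (hcard : Fintype.card F = q)
    (a : Fin 3 → K) :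
    (projLine a ∩ traceSet q h F K).Nonempty := by
  subst hcard
  obtain ⟨⟨x, y⟩, hxy, hzero⟩ := exists_ne_zero_traceLineForm_eq_zero F K h a
  have hxy : x ≠ 0 ∨ y ≠ 0 := by simpa only [ne_eq, Prod.mk_eq_zero, not_and_or] using hxy
  have hv : (![x, Tr (Fintype.card F) h x, algebraMap F K y] : Fin 3 → K) ≠ 0 := by
    refine hxy.elim (fun hx h0 => hx ?_) (fun hy h0 => hy ?_)
    · simpa using congrFun h0 0
    · simpa using congrFun h0 2
  refine ⟨mk K _ hv, (mk_mem_projLine_iff a _ hv).2 ?_, x, y, hxy, hv, rfl⟩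
  simpa [Fin.sum_univ_three, traceLineForm_apply] using hzero

/-- The trace construction is a blocking set: every line of
`PG(2, q^h)` contains at least one of its points. -/
theorem stmt_3 {F K : Type*} [Field F] [Field K] [Algebra F K]
    [Fintype F] [Fintype K]
    (q h : ℕ) (hq : IsPrimePow q) (hcard : Fintype.card F = q)
    (hh : 2 ≤ h) (hrank : Module.finrank F K = h)
    (a : Fin 3 → K) (ha : a ≠ 0) :
    (projLine a ∩ traceSet q h F K).Nonempty :=
  stmt_3_general q h hcard a
end

section
/- Let q be a prime power, h ≥ 2, and L = {(x : Tr(x) : y) : x ∈ F_{q^h}, y ∈ F_q, (x,y) ≠ (0,0)} ⊆ PG(2, q^h). Then every line of PG(2, q^h) meets L in exactly 1, q+1, or q^{h-1}+1 points. -/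
namespace TraceAux

open Finset Polynomial

section OneField

variable {K : Type*} [Field K]

lemma vec1_ne (x t : K) : (![x, t, 1] : Fin 3 → K) ≠ 0 := by
  intro hcon
  simpa using congrFun hcon 2

lemma vec0_ne {x : K} (t : K) (hx : x ≠ 0) : (![x, t, 0] : Fin 3 → K) ≠ 0 := by
  intro hcon
  exact hx (by simpa using congrFun hcon 0)

lemma vecmid_ne (x : K) {t : K} (ht : t ≠ 0) : (![x, t, 0] : Fin 3 → K) ≠ 0 := by
  intro hcon
  exact ht (by simpa using congrFun hcon 1)

lemma tr_zero {q h : ℕ} (hq : 1 ≤ q) : Tr q h (0 : K) = 0 := by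
  unfold Tr
  refine Finset.sum_eq_zero fun i _ => ?_
  exact zero_pow (by positivity)

lemma tr_const_mul {q h : ℕ} (c x : K) (hc : c ^ q = c) :
    Tr q h (c * x) = c * Tr q h x := by
  have hci : ∀ i, c ^ q ^ i = c := by
    intro i
    induction i with
    | zero => rw [pow_zero, pow_one]
    | succ i ih => rw [pow_succ, pow_mul, ih, hc]
  unfold Tr
  rw [Finset.mul_sum]
  refine Finset.sum_congr rfl fun i _ => ?_
  rw [mul_pow, hci]

lemma tr_add {q h : ℕ} (p n : ℕ) [ExpChar K p] (hqpn : q = p ^ n) (x y : K) :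
    Tr q h (x + y) = Tr q h x + Tr q h y := by
  unfold Tr
  rw [← Finset.sum_add_distrib]
  refine Finset.sum_congr rfl fun i _ => ?_
  have e : ∀ z : K, z ^ q ^ i = iterateFrobenius K p (n * i) z := fun z => by
    rw [iterateFrobenius_def, hqpn, ← pow_mul]
  rw [e, e, e, map_add]

lemma tr_pow {q h : ℕ} (p n : ℕ) [ExpChar K p] (hqpn : q = p ^ n) [Fintype K]
    (hKcard : Fintype.card K = q ^ h) (x : K) :
    Tr q h x ^ q = Tr q h x := by
  have e : ∀ z : K, z ^ q = iterateFrobenius K p n z := fun z => by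
    rw [iterateFrobenius_def, hqpn]
  unfold Tr
  rw [e, map_sum]
  have step : ∀ i, iterateFrobenius K p n (x ^ q ^ i) = x ^ q ^ (i + 1) := fun i => by
    rw [iterateFrobenius_def, ← hqpn, ← pow_mul, ← pow_succ]
  simp_rw [step]
  have hsum := Finset.sum_range_succ' (fun i => x ^ q ^ i) h
  have hsum2 := Finset.sum_range_succ (fun i => x ^ q ^ i) h
  have hxq : x ^ q ^ h = x := by rw [← hKcard]; exact FiniteField.pow_card x
  have hx0 : x ^ q ^ 0 = x := by rw [pow_zero, pow_one]
  have hcomb : (∑ i ∈ range h, x ^ q ^ (i + 1)) + x ^ q ^ 0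
      = (∑ i ∈ range h, x ^ q ^ i) + x ^ q ^ h := by
    rw [← hsum]; exact hsum2
  rw [hx0, hxq] at hcomb
  exact add_right_cancel hcomb

lemma fiber_ncard (f : K → K) (hadd : ∀ x y : K, f (x + y) = f x + f y)
    (c x0 : K) (hx0 : f x0 = c) :
    {x : K | f x = c}.ncard = {x : K | f x = 0}.ncard := by
  have himg : {x : K | f x = c} = (fun w => x0 + w) '' {x : K | f x = 0} := by
    ext z
    simp only [Set.mem_setOf_eq, Set.mem_image]
    constructor
    · intro hz
      refine ⟨z - x0, ?_, by ring⟩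
      have h2 := hadd x0 (z - x0)
      have h3 : x0 + (z - x0) = z := by ring
      rw [h3, hz, hx0] at h2
      exact (left_eq_add.mp h2)
    · rintro ⟨w, hw, rfl⟩
      rw [hadd, hx0, hw, add_zero]
  rw [himg, Set.ncard_image_of_injective _ (add_right_injective x0)]

lemma ncard_le_natDegree (P : K[X]) (hP : P ≠ 0) (s : Set K)
    (hs : ∀ x ∈ s, P.IsRoot x) : s.ncard ≤ P.natDegree := by
  classical
  have hsub : s ⊆ ↑P.roots.toFinset := by
    intro x hx
    simp only [Finset.mem_coe, Multiset.mem_toFinset, Polynomial.mem_roots']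
    exact ⟨hP, hs x hx⟩
  calc s.ncard ≤ (↑P.roots.toFinset : Set K).ncard :=
        Set.ncard_le_ncard hsub (P.roots.toFinset.finite_toSet)
    _ = P.roots.toFinset.card := Set.ncard_coe_finset _
    _ ≤ Multiset.card P.roots := Multiset.toFinset_card_le _
    _ ≤ P.natDegree := P.card_roots'

lemma tr_ker_bound {q h : ℕ} (hq2 : 2 ≤ q) (hh : 1 ≤ h) :
    {x : K | Tr q h x = 0}.ncard ≤ q ^ (h - 1) := by
  classical
  set P : K[X] := ∑ i ∈ range h, X ^ q ^ i with hPdef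
  have heval : ∀ x : K, P.eval x = Tr q h x := by
    intro x
    rw [hPdef, Polynomial.eval_finset_sum]
    simp [Tr]
  have hco : P.coeff (q ^ (h - 1)) = 1 := by
    rw [hPdef, Polynomial.finset_sum_coeff]
    have hite : ∀ i ∈ range h, ((X : K[X]) ^ q ^ i).coeff (q ^ (h - 1))
        = if i = h - 1 then 1 else 0 := by
      intro i hi
      rw [Polynomial.coeff_X_pow]
      congr 1
      simp only [eq_iff_iff]
      constructor
      · intro hqq
        exact Nat.pow_right_injective hq2 hqq.symm
      · rintro rfl; rfl
    rw [Finset.sum_congr rfl hite, Finset.sum_ite_eq' (range h) (h - 1) (fun _ => (1 : K))]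
    rw [if_pos (Finset.mem_range.mpr (by omega))]
  have hP0 : P ≠ 0 := by
    intro h0
    rw [h0, Polynomial.coeff_zero] at hco
    exact one_ne_zero hco.symm
  have hdeg : P.natDegree ≤ q ^ (h - 1) := by
    rw [hPdef]
    refine Polynomial.natDegree_sum_le_of_forall_le _ _ fun i hi => ?_
    rw [Polynomial.natDegree_X_pow]
    exact Nat.pow_le_pow_right (by omega) (by have := Finset.mem_range.mp hi; omega)
  refine le_trans (ncard_le_natDegree P hP0 _ fun x hx => ?_) hdeg
  rw [Polynomial.IsRoot, heval]
  exact hx.out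

lemma mem_projLine_mk3 {a : Fin 3 → K} {x t z : K} (hv : (![x, t, z] : Fin 3 → K) ≠ 0) :
    Projectivization.mk K ![x, t, z] hv ∈ projLine a ↔ a 0 * x + a 1 * t + a 2 * z = 0 := by
  obtain ⟨c, hc⟩ := Projectivization.exists_smul_eq_mk_rep K ![x, t, z] hv
  have h1 : Projectivization.mk K ![x, t, z] hv ∈ projLine a
      ↔ (∑ i, a i * (c • ![x, t, z]) i) = 0 := by
    rw [hc]; exact Iff.rfl
  rw [h1, Fin.sum_univ_three]
  simp only [Units.smul_def, Pi.smul_apply, smul_eq_mul, Matrix.cons_val_zero,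
    Matrix.cons_val_one, Matrix.head_cons]
  have h2 : (![x, t, z] : Fin 3 → K) 2 = z := rfl
  rw [h2]
  have key : a 0 * ((c : K) * x) + a 1 * ((c : K) * t) + a 2 * ((c : K) * z)
      = (c : K) * (a 0 * x + a 1 * t + a 2 * z) := by ring
  rw [key, mul_eq_zero]
  simp [c.ne_zero]

lemma smul_vec3 (c x t z : K) : c • (![x, t, z] : Fin 3 → K) = ![c * x, c * t, c * z] := by
  funext i
  fin_cases i <;> simp

lemma mk3_eq_mk3 {x t z x' t' z' : K} (hv : (![x, t, z] : Fin 3 → K) ≠ 0)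
    (hw : (![x', t', z'] : Fin 3 → K) ≠ 0) (c : K) (hc : c ≠ 0)
    (h0 : c * x' = x) (h1 : c * t' = t) (h2 : c * z' = z) :
    Projectivization.mk K ![x, t, z] hv = Projectivization.mk K ![x', t', z'] hw := by
  rw [Projectivization.mk_eq_mk_iff]
  exact ⟨Units.mk0 c hc, by rw [Units.smul_def, Units.val_mk0, smul_vec3, h0, h1, h2]⟩

lemma exists_of_mk3_eq {x t z x' t' z' : K} {hv : (![x, t, z] : Fin 3 → K) ≠ 0}
    {hw : (![x', t', z'] : Fin 3 → K) ≠ 0}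
    (h : Projectivization.mk K ![x, t, z] hv = Projectivization.mk K ![x', t', z'] hw) :
    ∃ c : K, c ≠ 0 ∧ c * x' = x ∧ c * t' = t ∧ c * z' = z := by
  rw [Projectivization.mk_eq_mk_iff] at h
  obtain ⟨c, hc⟩ := h
  rw [Units.smul_def, smul_vec3] at hc
  exact ⟨(c : K), c.ne_zero, congrFun hc 0, congrFun hc 1, congrFun hc 2⟩

lemma mk_congr {v w : Fin 3 → K} (hv : v ≠ 0) (hw : w ≠ 0) (h : v = w) :
    Projectivization.mk K v hv = Projectivization.mk K w hw := by
  subst h; rfl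

end OneField

section TwoFields

variable {F K : Type*} [Field F] [Field K] [Algebra F K] [Fintype F] [Fintype K]

lemma range_algebraMap_eq {q : ℕ} (hcard : Fintype.card F = q) :
    Set.range (algebraMap F K) = {z : K | z ^ q = z} := by
  have hq2 : 2 ≤ q := hcard ▸ Fintype.one_lt_card
  have hsub : Set.range (algebraMap F K) ⊆ {z : K | z ^ q = z} := by
    rintro _ ⟨y, rfl⟩
    simp only [Set.mem_setOf_eq, ← map_pow]
    rw [← hcard, FiniteField.pow_card]
  have hP : (X ^ q - X : K[X]) ≠ 0 := by
    intro hP0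
    have hco : (X ^ q - X : K[X]).coeff q = 0 := by rw [hP0]; simp
    rw [Polynomial.coeff_sub, Polynomial.coeff_X_pow, if_pos rfl, Polynomial.coeff_X] at hco
    have hq1 : ¬ (1 = q) := by omega
    rw [if_neg hq1] at hco
    simp at hco
  have h1 : ({z : K | z ^ q = z}).ncard ≤ q := by
    have hb := ncard_le_natDegree (X ^ q - X : K[X]) hP {z : K | z ^ q = z}
      (fun x hx => by
        simp only [Polynomial.IsRoot, Polynomial.eval_sub, Polynomial.eval_pow,
          Polynomial.eval_X]
        rw [hx.out]; ring)
    refine hb.trans ?_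
    refine le_trans (Polynomial.natDegree_sub_le _ _) ?_
    simp only [Polynomial.natDegree_X_pow, Polynomial.natDegree_X]
    omega
  have h2 : (Set.range (algebraMap F K)).ncard = q := by
    rw [← Set.image_univ, Set.ncard_image_of_injective _ (algebraMap F K).injective,
      Set.ncard_univ, Nat.card_eq_fintype_card, hcard]
  exact Set.eq_of_subset_of_ncard_le hsub (h1.trans h2.ge) (Set.toFinite _)

lemma tr_fiber_ncard {q h : ℕ} (hcard : Fintype.card F = q) (hh : 1 ≤ h)
    (hKcard : Fintype.card K = q ^ h)
    (hadd : ∀ x y : K, Tr q h (x + y) = Tr q h x + Tr q h y)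
    (hpow : ∀ x : K, Tr q h x ^ q = Tr q h x) :
    ∀ y : F, {x : K | Tr q h x = algebraMap F K y}.ncard = q ^ (h - 1) := by
  classical
  have hq2 : 2 ≤ q := hcard ▸ Fintype.one_lt_card
  have hmem : ∀ x : K, Tr q h x ∈ Set.range (algebraMap F K) := by
    intro x
    rw [range_algebraMap_eq hcard]
    exact hpow x
  set g : K → F := fun x => (hmem x).choose with hgdef
  have hg : ∀ x, algebraMap F K (g x) = Tr q h x := fun x => (hmem x).choose_spec
  have hfilter : ∀ y : F,
      {x : K | Tr q h x = algebraMap F K y}.ncard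
        = (Finset.univ.filter fun x : K => g x = y).card := by
    intro y
    have hseteq : {x : K | Tr q h x = algebraMap F K y}
        = ↑(Finset.univ.filter fun x : K => g x = y) := by
      ext x
      simp only [Set.mem_setOf_eq, Finset.coe_filter, Finset.mem_univ, true_and,
        Set.mem_setOf_eq]
      constructor
      · intro hx
        exact (algebraMap F K).injective (by rw [hg, hx])
      · rintro rfl
        exact (hg x).symm
    rw [hseteq, Set.ncard_coe_finset]
  have hsum : ∑ y : F, {x : K | Tr q h x = algebraMap F K y}.ncard = q ^ h := by
    have h2 := Finset.card_eq_sum_card_fiberwise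
      (f := g) (s := Finset.univ) (t := Finset.univ) (fun x _ => Finset.mem_univ (g x))
    rw [Finset.card_univ, hKcard] at h2
    rw [h2]
    exact Finset.sum_congr rfl fun y _ => (hfilter y)
  have hle : ∀ y : F, {x : K | Tr q h x = algebraMap F K y}.ncard
      ≤ {x : K | Tr q h x = 0}.ncard := by
    intro y
    by_cases hne : {x : K | Tr q h x = algebraMap F K y}.Nonempty
    · obtain ⟨x0, hx0⟩ := hne
      exact le_of_eq (fiber_ncard (Tr q h) hadd _ x0 hx0)
    · rw [Set.not_nonempty_iff_eq_empty.mp hne]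
      simp
  have hkb : {x : K | Tr q h x = 0}.ncard ≤ q ^ (h - 1) := tr_ker_bound hq2 hh
  have hqh : q * q ^ (h - 1) = q ^ h := by
    rw [← pow_succ']
    congr 1
    omega
  have hsumle : q ^ h ≤ q * {x : K | Tr q h x = 0}.ncard := by
    calc q ^ h = ∑ y : F, {x : K | Tr q h x = algebraMap F K y}.ncard := hsum.symm
      _ ≤ Finset.univ.card • {x : K | Tr q h x = 0}.ncard :=
          Finset.sum_le_card_nsmul _ _ _ fun y _ => hle y
      _ = q * {x : K | Tr q h x = 0}.ncard := by rw [Finset.card_univ, hcard, smul_eq_mul]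
  have hkeq : {x : K | Tr q h x = 0}.ncard = q ^ (h - 1) := by
    refine le_antisymm hkb ?_
    by_contra hlt
    push_neg at hlt
    have h3 : q * {x : K | Tr q h x = 0}.ncard < q * q ^ (h - 1) :=
      (Nat.mul_lt_mul_left (show 0 < q by omega)).mpr hlt
    omega
  have hconst : ∑ y : F, {x : K | Tr q h x = algebraMap F K y}.ncard
      = ∑ _y : F, {x : K | Tr q h x = 0}.ncard := by
    rw [hsum, Finset.sum_const, Finset.card_univ, hcard, smul_eq_mul, hkeq, hqh]
  intro y
  rw [← hkeq]
  exact (Finset.sum_eq_sum_iff_of_le fun i _ => hle i).mp hconst y (Finset.mem_univ y)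

end TwoFields

end TraceAux

open TraceAux in
/-- Every line of `PG(2, q^h)` meets the trace construction in
exactly `1`, `q+1`, or `q^(h-1)+1` points. -/
theorem stmt_4 {F K : Type*} [Field F] [Field K] [Algebra F K]
    [Fintype F] [Fintype K]
    (q h : ℕ) (hq : IsPrimePow q) (hcard : Fintype.card F = q)
    (hh : 2 ≤ h) (hrank : Module.finrank F K = h)
    (a : Fin 3 → K) (ha : a ≠ 0) :
    (projLine a ∩ traceSet q h F K).ncard = 1 ∨
    (projLine a ∩ traceSet q h F K).ncard = q + 1 ∨
    (projLine a ∩ traceSet q h F K).ncard = q ^ (h - 1) + 1 := by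
  classical
  -- characteristic bookkeeping
  haveI : CharP F (ringChar F) := ringChar.charP F
  obtain ⟨n, hpprime, hFcard⟩ := FiniteField.card F (ringChar F)
  haveI : Fact (ringChar F).Prime := ⟨hpprime⟩
  haveI : CharP K (ringChar F) :=
    charP_of_injective_algebraMap (algebraMap F K).injective (ringChar F)
  have hqpn : q = (ringChar F) ^ (n : ℕ) := by rw [← hcard, hFcard]
  have hq2 : 2 ≤ q := hcard ▸ Fintype.one_lt_card
  have h1 : 1 ≤ h := by omega
  have hKcard : Fintype.card K = q ^ h := by
    rw [Module.card_eq_pow_finrank (K := F) (V := K), hcard, hrank]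
  have tradd : ∀ x y : K, Tr q h (x + y) = Tr q h x + Tr q h y :=
    tr_add (ringChar F) n hqpn
  have trpow : ∀ x : K, Tr q h x ^ q = Tr q h x :=
    tr_pow (ringChar F) n hqpn hKcard
  have trmem : ∀ x : K, ∃ y : F, algebraMap F K y = Tr q h x := by
    intro x
    have hmem : Tr q h x ∈ Set.range (algebraMap F K) := by
      rw [range_algebraMap_eq hcard]
      exact trpow x
    exact hmem
  have amap_pow : ∀ y : F, (algebraMap F K y) ^ q = algebraMap F K y := fun y => by
    rw [← map_pow, ← hcard, FiniteField.pow_card]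
  have fib : ∀ y : F, {x : K | Tr q h x = algebraMap F K y}.ncard = q ^ (h - 1) :=
    tr_fiber_ncard hcard h1 hKcard tradd trpow
  haveI : Finite (Projectivization K (Fin 3 → K)) := Quotient.finite _
  set X : Set K := {x : K | a 0 * x + a 1 * Tr q h x + a 2 = 0} with hX
  set gm : K → Projectivization K (Fin 3 → K) :=
    fun x => Projectivization.mk K ![x, Tr q h x, 1] (vec1_ne _ _) with hgm
  set B : Set (Projectivization K (Fin 3 → K)) :=
    {P | ∃ x : K, ∃ hx : x ≠ 0, a 0 * x + a 1 * Tr q h x = 0 ∧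
      P = Projectivization.mk K ![x, Tr q h x, 0] (vec0_ne _ hx)} with hB
  -- decomposition of the intersection
  have hdecomp : projLine a ∩ traceSet q h F K = gm '' X ∪ B := by
    ext P
    constructor
    · rintro ⟨hline, x, y, hxy, hv, rfl⟩
      have heq : a 0 * x + a 1 * Tr q h x + a 2 * algebraMap F K y = 0 := (mem_projLine_mk3 hv).1 hline
      by_cases hy : y = 0
      · subst hy
        have hx : x ≠ 0 := hxy.resolve_right (fun hc => hc rfl)
        right
        rw [map_zero, mul_zero, add_zero] at heq
        exact ⟨x, hx, heq, mk_congr hv _ (by rw [map_zero])⟩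
      · left
        have hTy : algebraMap F K y ≠ 0 := fun hc => hy ((algebraMap F K).injective (by rw [hc, map_zero]))
        have htr : Tr q h ((algebraMap F K y)⁻¹ * x) = (algebraMap F K y)⁻¹ * Tr q h x :=
          tr_const_mul _ _ (by rw [inv_pow, amap_pow])
        refine ⟨(algebraMap F K y)⁻¹ * x, ?_, ?_⟩
        · show a 0 * ((algebraMap F K y)⁻¹ * x) + a 1 * Tr q h ((algebraMap F K y)⁻¹ * x) + a 2 = 0
          rw [htr]
          field_simp
          linear_combination heq
        · exact mk3_eq_mk3 _ _ (algebraMap F K y)⁻¹ (inv_ne_zero hTy) rfl htr.symm (inv_mul_cancel₀ hTy)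
    · rintro (⟨x, hx, rfl⟩ | ⟨x, hx, hphix, rfl⟩)
      · have hx' : a 0 * x + a 1 * Tr q h x + a 2 = 0 := hx
        refine ⟨(mem_projLine_mk3 _).2 (by linear_combination hx'), ?_⟩
        exact ⟨x, 1, Or.inr one_ne_zero, (by rw [map_one]; exact vec1_ne x _),
          (mk_congr _ _ (by rw [map_one])).symm⟩
      · refine ⟨(mem_projLine_mk3 _).2 (by linear_combination hphix), ?_⟩
        exact ⟨x, 0, Or.inl hx, (by rw [map_zero]; exact vec0_ne _ hx),
          (mk_congr _ _ (by rw [map_zero])).symm⟩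
  have hginj : Function.Injective gm := by
    intro x x' hxx'
    obtain ⟨c, hc0, e0, e1, e2⟩ := exists_of_mk3_eq hxx'
    rw [mul_one] at e2
    rw [e2, one_mul] at e0
    exact e0.symm
  have hdisj : Disjoint (gm '' X) B := by
    rw [Set.disjoint_left]
    rintro P ⟨x, hxX, rfl⟩ ⟨z, hz, hphi, hPz⟩
    obtain ⟨c, hc0, e0, e1, e2⟩ := exists_of_mk3_eq hPz
    rw [mul_zero] at e2
    exact one_ne_zero e2.symm
  have hcount : (projLine a ∩ traceSet q h F K).ncard = X.ncard + B.ncard := by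
    rw [hdecomp, Set.ncard_union_eq hdisj (Set.toFinite _) (Set.toFinite _),
      Set.ncard_image_of_injective _ hginj]
  rw [hcount]
  -- existence of a nonzero trace-kernel element
  have hker_big : ∃ x0 : K, x0 ≠ 0 ∧ Tr q h x0 = 0 := by
    by_contra hcon
    push_neg at hcon
    have hsub : {x : K | Tr q h x = 0} ⊆ {0} := by
      intro x hx
      by_contra hx0
      exact hcon x hx0 hx.out
    have hle := Set.ncard_le_ncard hsub (Set.finite_singleton 0)
    rw [Set.ncard_singleton] at hle
    have hfib0 : {x : K | Tr q h x = 0}.ncard = q ^ (h - 1) := by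
      have := fib 0
      rw [map_zero] at this
      exact this
    have hpw : q ≤ q ^ (h - 1) := by
      calc q = q ^ 1 := (pow_one q).symm
        _ ≤ q ^ (h - 1) := Nat.pow_le_pow_right (by omega) (by omega)
    omega
  by_cases h01 : a 0 = 0 ∧ a 1 = 0
  · -- the line Z = 0
    have ha2 : a 2 ≠ 0 := by
      intro h2
      apply ha
      funext i
      fin_cases i
      · exact h01.1
      · exact h01.2
      · exact h2
    have hX0 : X = ∅ := by
      ext x
      simp [hX, h01.1, h01.2, ha2]
    set U := {u : K | Tr q h u = 1} with hU
    set pt0 := Projectivization.mk K ![(1 : K), 0, 0] (vec0_ne 0 one_ne_zero) with hpt0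
    set jm : K → Projectivization K (Fin 3 → K) :=
      fun u => Projectivization.mk K ![u, 1, 0] (vecmid_ne u one_ne_zero) with hjm
    have hBeq : B = insert pt0 (jm '' U) := by
      ext P
      simp only [hB, Set.mem_setOf_eq, Set.mem_insert_iff, Set.mem_image]
      constructor
      · rintro ⟨x, hx, -, rfl⟩
        by_cases ht : Tr q h x = 0
        · left
          exact mk3_eq_mk3 _ _ x hx (mul_one x) (by rw [mul_zero, ht]) (mul_zero x)
        · right
          refine ⟨(Tr q h x)⁻¹ * x, ?_, ?_⟩
          · show Tr q h ((Tr q h x)⁻¹ * x) = 1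
            rw [tr_const_mul _ _ (by rw [inv_pow, trpow])]
            exact inv_mul_cancel₀ ht
          · exact (mk3_eq_mk3 _ _ (Tr q h x) ht
              (by field_simp) (mul_one _) (mul_zero _)).symm
      · rintro (rfl | ⟨u, hu, rfl⟩)
        · obtain ⟨x0, hx0ne, hx0tr⟩ := hker_big
          refine ⟨x0, hx0ne, by rw [h01.1, h01.2]; ring, ?_⟩
          exact mk3_eq_mk3 _ _ x0⁻¹ (inv_ne_zero hx0ne)
            (inv_mul_cancel₀ hx0ne) (by rw [hx0tr, mul_zero]) (mul_zero _)
        · have hu1 : Tr q h u = 1 := hu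
          have hu0 : u ≠ 0 := by
            rintro rfl
            rw [tr_zero (by omega)] at hu1
            exact zero_ne_one hu1
          refine ⟨u, hu0, by rw [h01.1, h01.2]; ring, ?_⟩
          exact (mk_congr _ _ (by rw [hu1])).symm
    have hpt0_nmem : pt0 ∉ jm '' U := by
      rintro ⟨u, hu, heq⟩
      obtain ⟨c, hc0, e0, e1, e2⟩ := exists_of_mk3_eq heq
      rw [mul_zero] at e1
      exact one_ne_zero e1.symm
    have hjm_inj : Function.Injective jm := by
      intro u u' huu'
      obtain ⟨c, hc0, e0, e1, e2⟩ := exists_of_mk3_eq huu'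
      rw [mul_one] at e1
      rw [e1, one_mul] at e0
      exact e0.symm
    have hUcard : U.ncard = q ^ (h - 1) := by
      have := fib 1
      rw [map_one] at this
      exact this
    right; right
    rw [hX0, Set.ncard_empty, hBeq,
      Set.ncard_insert_of_notMem hpt0_nmem (Set.toFinite _),
      Set.ncard_image_of_injective _ hjm_inj, hUcard]
    omega
  · -- lines with (a 0, a 1) ≠ (0, 0)
    have φadd : ∀ x y : K, a 0 * (x + y) + a 1 * Tr q h (x + y)
        = (a 0 * x + a 1 * Tr q h x) + (a 0 * y + a 1 * Tr q h y) := by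
      intro x y
      rw [tradd]
      ring
    have hcross : ∀ x z : K, a 0 * x + a 1 * Tr q h x = 0 → a 0 * z + a 1 * Tr q h z = 0 →
        x * Tr q h z = z * Tr q h x := by
      intro x z hx hz
      by_cases ha0 : a 0 = 0
      · have ha1 : a 1 ≠ 0 := fun h1' => h01 ⟨ha0, h1'⟩
        rw [ha0, zero_mul, zero_add] at hx hz
        rw [mul_eq_zero] at hx hz
        rw [hx.resolve_left ha1, hz.resolve_left ha1, mul_zero, mul_zero]
      · apply mul_left_cancel₀ ha0
        linear_combination (Tr q h z) * hx - (Tr q h x) * hz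
    have hXfib : X = {x : K | a 0 * x + a 1 * Tr q h x = -(a 2)} := by
      ext x
      simp only [hX, Set.mem_setOf_eq]
      constructor <;> intro hx <;> linear_combination hx
    by_cases hker : ∃ z : K, z ≠ 0 ∧ a 0 * z + a 1 * Tr q h z = 0
    · obtain ⟨z, hz0, hzker⟩ := hker
      have hBsing : B = {Projectivization.mk K ![z, Tr q h z, 0] (vec0_ne _ hz0)} := by
        ext P
        simp only [hB, Set.mem_setOf_eq, Set.mem_singleton_iff]
        constructor
        · rintro ⟨x, hx, hphix, rfl⟩
          refine mk3_eq_mk3 _ _ (x / z) (div_ne_zero hx hz0) (div_mul_cancel₀ x hz0) ?_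
            (mul_zero _)
          have hc := hcross x z hphix hzker
          field_simp
          linear_combination hc
        · rintro rfl
          exact ⟨z, hz0, hzker, rfl⟩
      have hBcard : B.ncard = 1 := by rw [hBsing, Set.ncard_singleton]
      by_cases hXne : X.Nonempty
      · obtain ⟨x0, hx0⟩ := hXne
        have hx0' : a 0 * x0 + a 1 * Tr q h x0 = -(a 2) := by
          have hx0'' : a 0 * x0 + a 1 * Tr q h x0 + a 2 = 0 := hx0
          linear_combination hx0''
        have hXcard : X.ncard = {x : K | a 0 * x + a 1 * Tr q h x = 0}.ncard := by
          rw [hXfib]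
          exact fiber_ncard (fun x => a 0 * x + a 1 * Tr q h x) φadd (-(a 2)) x0 hx0'
        by_cases ha0 : a 0 = 0
        · have ha1 : a 1 ≠ 0 := fun h1' => h01 ⟨ha0, h1'⟩
          have hkset : {x : K | a 0 * x + a 1 * Tr q h x = 0}
              = {x : K | Tr q h x = algebraMap F K 0} := by
            ext x
            simp only [Set.mem_setOf_eq, ha0, zero_mul, zero_add, map_zero, mul_eq_zero]
            constructor
            · intro hx
              exact hx.resolve_left ha1
            · intro hx
              exact Or.inr hx
          right; right
          rw [hXcard, hkset, fib 0, hBcard]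
        · -- a 0 ≠ 0
          have ha1 : a 1 ≠ 0 := by
            intro h1'
            rw [h1', zero_mul, add_zero] at hzker
            rcases mul_eq_zero.mp hzker with hcc | hcc
            · exact ha0 hcc
            · exact hz0 hcc
          have htz : Tr q h z ≠ 0 := by
            intro h0
            rw [h0, mul_zero, add_zero] at hzker
            rcases mul_eq_zero.mp hzker with hcc | hcc
            · exact ha0 hcc
            · exact hz0 hcc
          have hu0 : (Tr q h z)⁻¹ * z ≠ 0 := mul_ne_zero (inv_ne_zero htz) hz0
          have hukernel : a 0 * ((Tr q h z)⁻¹ * z) + a 1 * Tr q h ((Tr q h z)⁻¹ * z) = 0 := by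
            rw [tr_const_mul _ _ (by rw [inv_pow, trpow z])]
            field_simp
            linear_combination hzker
          have hkset : {x : K | a 0 * x + a 1 * Tr q h x = 0}
              = (fun y : F => algebraMap F K y * ((Tr q h z)⁻¹ * z)) '' Set.univ := by
            ext x
            simp only [Set.mem_setOf_eq, Set.image_univ, Set.mem_range]
            constructor
            · intro hx
              obtain ⟨y, hy⟩ := trmem x
              refine ⟨y, ?_⟩
              rw [hy]
              have hc2 := hcross x z hx hzker
              field_simp
              linear_combination (-1 : K) * hc2
            · rintro ⟨y, rfl⟩
              rw [tr_const_mul _ _ (amap_pow y)]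
              linear_combination (algebraMap F K y) * hukernel
          have hinj2 : Function.Injective
              (fun y : F => algebraMap F K y * ((Tr q h z)⁻¹ * z)) := by
            intro y y' hyy'
            have hyy2 : algebraMap F K y * ((Tr q h z)⁻¹ * z)
                = algebraMap F K y' * ((Tr q h z)⁻¹ * z) := hyy'
            exact (algebraMap F K).injective (mul_right_cancel₀ hu0 hyy2)
          have hkcard : {x : K | a 0 * x + a 1 * Tr q h x = 0}.ncard = q := by
            rw [hkset, Set.ncard_image_of_injective _ hinj2, Set.ncard_univ,
              Nat.card_eq_fintype_card, hcard]
          right; left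
          rw [hXcard, hkcard, hBcard]
      · -- X empty : total count 1
        left
        rw [Set.not_nonempty_iff_eq_empty.mp hXne, Set.ncard_empty, hBcard]
    · -- the affine map is injective : total count 1
      push_neg at hker
      have hBemp : B = ∅ := by
        ext P
        simp only [hB, Set.mem_setOf_eq, Set.mem_empty_iff_false, iff_false]
        rintro ⟨x, hx, hphix, -⟩
        exact hker x hx hphix
      have hinj : Function.Injective (fun x : K => a 0 * x + a 1 * Tr q h x) := by
        intro x x' hxx'
        by_contra hne
        have hds : a 0 * x + a 1 * Tr q h x = a 0 * x' + a 1 * Tr q h x' := hxx'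
        refine hker (x - x') (sub_ne_zero.mpr hne) ?_
        have h2 := φadd x' (x - x')
        have h3 : x' + (x - x') = x := by ring
        rw [h3] at h2
        rw [hds] at h2
        exact (left_eq_add.mp h2)
      obtain ⟨x0, hx0⟩ := (Finite.injective_iff_surjective.mp hinj) (-(a 2))
      have hx0' : a 0 * x0 + a 1 * Tr q h x0 = -(a 2) := hx0
      have hXsing : X = {x0} := by
        ext x
        simp only [hX, Set.mem_setOf_eq, Set.mem_singleton_iff]
        constructor
        · intro hx
          apply hinj
          show a 0 * x + a 1 * Tr q h x = a 0 * x0 + a 1 * Tr q h x0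
          rw [hx0']
          linear_combination hx
        · rintro rfl
          linear_combination hx0'
      left
      rw [hXsing, Set.ncard_singleton, hBemp, Set.ncard_empty]
end

section
/- Let q be a prime power, h ≥ 2, and L a subset of PG(2, q^h) of size q^h + q^{h-1} + 1 such that every line meets L in exactly 1, q+1, or q^{h-1}+1 points, and any two (q^{h-1}+1)-secants meet in a point of L (so every point not in L lies on at most one (q^{h-1}+1)-secant). If P ∉ L, then P lies on at least q^h − q^{h-2} + 1 tangent lines to L. Concretely: if P ∉ L lies on no (q^{h-1}+1)-secant, then P lies on exactly q^h − q^{h-2} + 1 tangents; if P lies on exactly one (q^{h-1}+1)-secant, then P lies on exactly q^h tangents. -/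
noncomputable section Helper
open Projectivization

variable {K : Type*} [Field K]

/-- the dot-with-`a` linear functional on `Fin 3 → K`. -/
def dotf (a : Fin 3 → K) : (Fin 3 → K) →ₗ[K] K where
  toFun v := ∑ i, a i * v i
  map_add' u v := by simp [mul_add, Finset.sum_add_distrib]
  map_smul' c v := by simp [Finset.mul_sum, mul_left_comm]

lemma dotf_eq_zero_iff {a : Fin 3 → K} : dotf a = 0 ↔ a = 0 := by
  constructor
  · intro h
    funext i
    have := congrArg (fun f => f (Pi.single i 1)) h
    simpa [dotf, Pi.single_apply, Finset.sum_ite_eq'] using this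
  · rintro rfl; ext v; simp [dotf]

lemma mem_projLine_iff (a : Fin 3 → K) (P : Projectivization K (Fin 3 → K)) :
    P ∈ projLine a ↔ dotf a P.rep = 0 := Iff.rfl

lemma mem_projLine_mk_iff (a : Fin 3 → K) (v : Fin 3 → K) (hv : v ≠ 0) :
    Projectivization.mk K v hv ∈ projLine a ↔ dotf a v = 0 := by
  obtain ⟨c, hc⟩ := Projectivization.exists_smul_eq_mk_rep K v hv
  rw [mem_projLine_iff, ← hc, Units.smul_def, map_smul]
  simp [smul_eq_zero]

end Helper

noncomputable section Helper2
open Projectivization Module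

variable {K : Type*} [Field K]

lemma dotf_comm (a v : Fin 3 → K) : dotf a v = dotf v a := by
  simp [dotf, mul_comm]

lemma dotf_single (a : Fin 3 → K) (i : Fin 3) : dotf a (Pi.single i 1) = a i := by
  simp [dotf, Pi.single_apply, Finset.sum_ite_eq']

lemma exists_smul_of_ker_le_ker {f g : (Fin 3 → K) →ₗ[K] K} (hf : f ≠ 0)
    (h : LinearMap.ker f ≤ LinearMap.ker g) : ∃ c : K, g = c • f := by
  obtain ⟨v, hv⟩ : ∃ v, f v ≠ 0 := by
    by_contra hc
    push_neg at hc
    exact hf (LinearMap.ext fun w => by simp [hc])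
  refine ⟨g v / f v, LinearMap.ext fun w => ?_⟩
  have hmem : w - (f w / f v) • v ∈ LinearMap.ker f := by
    simp [LinearMap.mem_ker, map_sub, map_smul, div_mul_cancel₀ _ hv]
  have := h hmem
  rw [LinearMap.mem_ker, map_sub, map_smul, sub_eq_zero] at this
  rw [LinearMap.smul_apply, smul_eq_mul, this, smul_eq_mul]
  field_simp

lemma finrank_ker_dotf {a : Fin 3 → K} (ha : a ≠ 0) :
    finrank K (LinearMap.ker (dotf a)) = 2 := by
  have hne : dotf a ≠ 0 := fun h => ha (dotf_eq_zero_iff.1 h)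
  have hsurj : LinearMap.range (dotf a) = ⊤ := by
    obtain ⟨v, hv⟩ : ∃ v, dotf a v ≠ 0 := by
      by_contra hc
      push_neg at hc
      exact hne (LinearMap.ext fun w => by simp [hc])
    rw [Submodule.eq_top_iff']
    intro x
    exact ⟨(x / dotf a v) • v, by simp [div_mul_cancel₀ _ hv]⟩
  have h1 := LinearMap.finrank_range_add_finrank_ker (dotf a)
  rw [hsurj, finrank_top, Module.finrank_self, Module.finrank_fin_fun] at h1
  omega

lemma projLine_eq_of_two_points {a b : Fin 3 → K} (ha : a ≠ 0) (hb : b ≠ 0)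
    {P Q : Projectivization K (Fin 3 → K)} (hPQ : P ≠ Q)
    (hPa : P ∈ projLine a) (hQa : Q ∈ projLine a)
    (hPb : P ∈ projLine b) (hQb : Q ∈ projLine b) : projLine a = projLine b := by
  have hp := P.rep_nonzero
  have hind : LinearIndependent K ![P.rep, Q.rep] := by
    rw [LinearIndependent.pair_iff' hp]
    intro c hc
    apply hPQ
    rw [← P.mk_rep, ← Q.mk_rep]
    have hc0 : c ≠ 0 := by rintro rfl; exact Q.rep_nonzero (by simp [← hc])
    rw [Projectivization.mk_eq_mk_iff]
    exact ⟨(Units.mk0 c hc0)⁻¹, by simp [Units.smul_def, ← hc, smul_smul, inv_mul_cancel₀ hc0]⟩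
  have hspan : finrank K (Submodule.span K {P.rep, Q.rep}) = 2 := by
    have h2 := finrank_span_eq_card (R := K) hind
    have hr : Set.range ![P.rep, Q.rep] = {P.rep, Q.rep} := by
      ext v
      simp [Matrix.range_cons, Matrix.range_empty, or_comm]
    rw [hr] at h2
    simpa using h2
  have key : ∀ c : Fin 3 → K, c ≠ 0 → P ∈ projLine c → Q ∈ projLine c →
      LinearMap.ker (dotf c) = Submodule.span K {P.rep, Q.rep} := by
    intro c hc hPc hQc
    refine (Submodule.eq_of_le_of_finrank_eq ?_ ?_).symm
    · rw [Submodule.span_le]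
      rintro v (rfl | rfl)
      · exact hPc
      · exact hQc
    · rw [hspan, finrank_ker_dotf hc]
  have hker : LinearMap.ker (dotf a) = LinearMap.ker (dotf b) := by
    rw [key a ha hPa hQa, key b hb hPb hQb]
  obtain ⟨c, hcb⟩ := exists_smul_of_ker_le_ker
    (fun h => ha (dotf_eq_zero_iff.1 h)) hker.le
  have hc0 : c ≠ 0 := by
    rintro rfl
    exact hb (dotf_eq_zero_iff.1 (by simpa using hcb))
  ext R
  rw [mem_projLine_iff, mem_projLine_iff, hcb]
  simp [hc0]

lemma exists_line_through (P Q : Projectivization K (Fin 3 → K)) :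
    ∃ ℓ, IsLine ℓ ∧ P ∈ ℓ ∧ Q ∈ ℓ := by
  have hp := P.rep_nonzero
  have hq := Q.rep_nonzero
  have h1 := finrank_ker_dotf (K := K) hp
  have h2 := finrank_ker_dotf (K := K) hq
  set s := LinearMap.ker (dotf P.rep)
  set t := LinearMap.ker (dotf Q.rep)
  have hsup : finrank K ↥(s ⊔ t) ≤ 3 := by
    have := Submodule.finrank_le (s ⊔ t)
    rwa [Module.finrank_fin_fun] at this
  have hinf : 1 ≤ finrank K ↥(s ⊓ t) := by
    have := Submodule.finrank_sup_add_finrank_inf_eq s t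
    omega
  have hbot : s ⊓ t ≠ ⊥ := by
    intro h
    rw [h] at hinf
    simp at hinf
  obtain ⟨a, ⟨has, hat⟩, ha0⟩ := (Submodule.ne_bot_iff _).1 hbot
  refine ⟨projLine a, ⟨a, ha0, rfl⟩, ?_, ?_⟩
  · rw [mem_projLine_iff, dotf_comm]; exact has
  · rw [mem_projLine_iff, dotf_comm]; exact hat

end Helper2

noncomputable section Helper3
open Projectivization Module

variable {K : Type*} [Field K] [Fintype K]

lemma dotf_smul_left (c : K) (a v : Fin 3 → K) : dotf (c • a) v = c * dotf a v := by
  simp [dotf, Finset.mul_sum, mul_assoc]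

lemma projLine_smul {c : K} (hc : c ≠ 0) (a : Fin 3 → K) :
    projLine (c • a) = projLine a := by
  ext R
  rw [mem_projLine_iff, mem_projLine_iff, dotf_smul_left]
  simp [hc]

lemma eq_smul_of_projLine_eq {a b : Fin 3 → K} (ha : a ≠ 0) (hb : b ≠ 0)
    (h : projLine a = projLine b) : ∃ c : K, c ≠ 0 ∧ b = c • a := by
  have hker : LinearMap.ker (dotf a) ≤ LinearMap.ker (dotf b) := by
    intro v hv
    rw [LinearMap.mem_ker] at hv ⊢
    rcases eq_or_ne v 0 with rfl | hv0
    · simp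
    · rw [← mem_projLine_mk_iff b v hv0, ← h, mem_projLine_mk_iff]
      exact hv
  obtain ⟨c, hc⟩ := exists_smul_of_ker_le_ker (fun hz => ha (dotf_eq_zero_iff.1 hz)) hker
  have hcb : b = c • a := by
    funext i
    have := congrArg (fun f => f (Pi.single i 1)) hc
    simpa [dotf_single] using this
  refine ⟨c, ?_, hcb⟩
  rintro rfl
  exact hb (by simp [hcb])

set_option maxHeartbeats 2000000 in
lemma card_linesThrough (P : Projectivization K (Fin 3 → K)) :
    {ℓ : Set (Projectivization K (Fin 3 → K)) | IsLine ℓ ∧ P ∈ ℓ}.ncard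
      = Fintype.card K + 1 := by
  classical
  set D := LinearMap.ker (dotf P.rep) with hD
  letI : Fintype D := Fintype.ofFinite _
  have hcardD : Fintype.card D = Fintype.card K ^ 2 := by
    rw [card_eq_pow_finrank (K := K) (V := D), finrank_ker_dotf P.rep_nonzero]
  set s : Finset D := Finset.univ.filter (fun a => (a : Fin 3 → K) ≠ 0) with hs
  set f : D → Set (Projectivization K (Fin 3 → K)) := fun a => projLine (a : Fin 3 → K)
    with hf
  set t : Finset (Set (Projectivization K (Fin 3 → K))) := s.image f with ht
  -- the set of lines through P is the image
  have hset : {ℓ : Set (Projectivization K (Fin 3 → K)) | IsLine ℓ ∧ P ∈ ℓ} = ↑t := by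
    ext ℓ
    simp only [ht, hf, hs, Finset.coe_image, Set.mem_image, Finset.mem_coe,
      Finset.mem_filter, Finset.mem_univ, true_and, Set.mem_setOf_eq]
    constructor
    · rintro ⟨⟨b, hb0, rfl⟩, hPb⟩
      rw [mem_projLine_iff, dotf_comm] at hPb
      exact ⟨⟨b, hPb⟩, hb0, rfl⟩
    · rintro ⟨⟨b, hbD⟩, hb0, rfl⟩
      refine ⟨⟨b, hb0, rfl⟩, ?_⟩
      rw [mem_projLine_iff, dotf_comm]
      exact hbD
  -- each fiber has cardinality |K| - 1
  have hfiber : ∀ ℓ ∈ t, (s.filter (fun a => f a = ℓ)).card = Fintype.card K - 1 := by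
    intro ℓ hℓ
    rw [ht, Finset.mem_image] at hℓ
    obtain ⟨a₀, ha₀s, rfl⟩ := hℓ
    rw [hs, Finset.mem_filter] at ha₀s
    have ha₀ : (a₀ : Fin 3 → K) ≠ 0 := ha₀s.2
    have himg : s.filter (fun a => f a = f a₀) = Finset.image (fun c : Kˣ => (c : K) • a₀)
        Finset.univ := by
      ext b
      simp only [Finset.mem_filter, Finset.mem_image, Finset.mem_univ, true_and, hs, hf]
      constructor
      · rintro ⟨hb0, hbl⟩
        obtain ⟨c, hc0, hcb⟩ := eq_smul_of_projLine_eq ha₀ hb0 hbl.symm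
        refine ⟨Units.mk0 c hc0, ?_⟩
        ext1
        simp [hcb]
      · rintro ⟨c, rfl⟩
        constructor
        · simp only [ne_eq, Submodule.coe_smul]
          intro hz
          exact ha₀ (by simpa [smul_eq_zero, c.ne_zero] using hz)
        · show projLine _ = projLine _
          rw [Submodule.coe_smul]
          exact projLine_smul c.ne_zero _
    rw [himg, Finset.card_image_of_injective _ ?_, Finset.card_univ, Fintype.card_units]
    intro c c' hcc
    simp only at hcc
    have hcc' : (c : K) • (a₀ : Fin 3 → K) = (c' : K) • (a₀ : Fin 3 → K) := by
      have := congrArg Subtype.val hcc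
      simpa using this
    exact Units.ext (smul_left_injective K ha₀ hcc')
  -- count
  have hsum := Finset.card_eq_sum_card_fiberwise
    (fun a (ha : a ∈ s) => Finset.mem_image_of_mem f ha)
  rw [Finset.sum_congr rfl hfiber, Finset.sum_const, smul_eq_mul] at hsum
  have hscard : s.card = Fintype.card K ^ 2 - 1 := by
    have : s = Finset.univ.erase 0 := by
      ext a
      simp [hs, Finset.mem_erase, and_comm, Submodule.coe_eq_zero]
    rw [this, Finset.card_erase_of_mem (Finset.mem_univ 0), Finset.card_univ, hcardD]
  have hK2 : 2 ≤ Fintype.card K := Fintype.one_lt_card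
  have htc : t.card = Fintype.card K + 1 := by
    have h1 : 1 ≤ Fintype.card K := by omega
    have h2 : 1 ≤ Fintype.card K ^ 2 := Nat.one_le_pow _ _ (by omega)
    have hfact : (Fintype.card K + 1) * (Fintype.card K - 1) = Fintype.card K ^ 2 - 1 := by
      zify [h1, h2]
      ring
    rw [hscard, ← hfact] at hsum
    exact (Nat.eq_of_mul_eq_mul_right (by omega) hsum).symm
  rw [hset, Set.ncard_coe_finset, htc]

end Helper3
section Main
open Projectivization Module

set_option maxHeartbeats 2000000 in
theorem stmt_6' {F K : Type*} [Field F] [Field K] [Algebra F K]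
    [Fintype F] [Fintype K]
    (q h : ℕ) (hq : IsPrimePow q) (hcard : Fintype.card F = q)
    (hh : 2 ≤ h) (hrank : Module.finrank F K = h)
    (L : Set (Projectivization K (Fin 3 → K)))
    (hL : L.ncard = q ^ h + q ^ (h - 1) + 1)
    (hlines : ∀ ℓ, IsLine ℓ → (ℓ ∩ L).ncard = 1 ∨ (ℓ ∩ L).ncard = q + 1 ∨
      (ℓ ∩ L).ncard = q ^ (h - 1) + 1)
    (hsec : ∀ (Q : Projectivization K (Fin 3 → K))
      (ℓ₁ ℓ₂ : Set (Projectivization K (Fin 3 → K))), IsLine ℓ₁ → IsLine ℓ₂ →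
      ℓ₁ ≠ ℓ₂ → (ℓ₁ ∩ L).ncard = q ^ (h - 1) + 1 →
      (ℓ₂ ∩ L).ncard = q ^ (h - 1) + 1 → Q ∈ ℓ₁ → Q ∈ ℓ₂ → Q ∈ L)
    (P : Projectivization K (Fin 3 → K)) (hP : P ∉ L) :
    q ^ h - q ^ (h - 2) + 1 ≤
      {ℓ | IsLine ℓ ∧ P ∈ ℓ ∧ (ℓ ∩ L).ncard = 1}.ncard ∧
    (({ℓ | IsLine ℓ ∧ P ∈ ℓ ∧ (ℓ ∩ L).ncard = q ^ (h - 1) + 1} :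
        Set (Set (Projectivization K (Fin 3 → K)))) = ∅ →
      {ℓ | IsLine ℓ ∧ P ∈ ℓ ∧ (ℓ ∩ L).ncard = 1}.ncard
        = q ^ h - q ^ (h - 2) + 1) ∧
    ({ℓ | IsLine ℓ ∧ P ∈ ℓ ∧ (ℓ ∩ L).ncard = q ^ (h - 1) + 1}.ncard = 1 →
      {ℓ | IsLine ℓ ∧ P ∈ ℓ ∧ (ℓ ∩ L).ncard = 1}.ncard = q ^ h) := by
  classical
  have hq2 : 2 ≤ q := hq.two_le
  have hcardK : Fintype.card K = q ^ h := by
    rw [card_eq_pow_finrank (K := F) (V := K), hcard, hrank]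
  -- finiteness
  haveI : Finite (Projectivization K (Fin 3 → K)) := Quotient.finite _
  haveI : Fintype (Projectivization K (Fin 3 → K)) := Fintype.ofFinite _
  -- the finset of lines through P
  set T : Finset (Set (Projectivization K (Fin 3 → K))) :=
    {ℓ : Set (Projectivization K (Fin 3 → K)) | IsLine ℓ ∧ P ∈ ℓ}.toFinset with hT
  have hmemT : ∀ ℓ, ℓ ∈ T ↔ IsLine ℓ ∧ P ∈ ℓ := by
    intro ℓ; rw [hT, Set.mem_toFinset]; rfl
  have hTcard : T.card = q ^ h + 1 := by
    rw [hT, ← Set.ncard_eq_toFinset_card', card_linesThrough, hcardK]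
  -- the partition sum
  have hsum : ∑ ℓ ∈ T, (ℓ ∩ L).ncard = q ^ h + q ^ (h - 1) + 1 := by
    set g : Projectivization K (Fin 3 → K) → Set (Projectivization K (Fin 3 → K)) :=
      fun Q => Classical.choose (exists_line_through P Q) with hg
    have hgspec : ∀ Q, IsLine (g Q) ∧ P ∈ g Q ∧ Q ∈ g Q :=
      fun Q => Classical.choose_spec (exists_line_through P Q)
    have hmap : ∀ Q ∈ L.toFinset, g Q ∈ T := by
      intro Q _
      rw [hmemT]
      exact ⟨(hgspec Q).1, (hgspec Q).2.1⟩
    have hcount := Finset.card_eq_sum_card_fiberwise hmap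
    have hfib : ∀ ℓ ∈ T, (L.toFinset.filter (fun Q => g Q = ℓ)).card
        = (ℓ ∩ L).ncard := by
      intro ℓ hℓ
      rw [← Set.ncard_coe_finset]
      congr 1
      ext Q
      simp only [Finset.coe_filter, Set.mem_toFinset, Set.mem_setOf_eq, Set.mem_inter_iff]
      constructor
      · rintro ⟨hQL, rfl⟩
        exact ⟨(hgspec Q).2.2, hQL⟩
      · rintro ⟨hQℓ, hQL⟩
        refine ⟨hQL, ?_⟩
        have hPQ : P ≠ Q := fun hpq => hP (hpq ▸ hQL)
        obtain ⟨hl, hPl⟩ := (hmemT ℓ).1 hℓ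
        obtain ⟨a, ha0, hga⟩ := (hgspec Q).1
        obtain ⟨b, hb0, hlb⟩ := hl
        rw [hga, hlb]
        exact projLine_eq_of_two_points ha0 hb0 hPQ (hga ▸ (hgspec Q).2.1)
          (hga ▸ (hgspec Q).2.2) (hlb ▸ hPl) (hlb ▸ hQℓ)
    rw [Finset.sum_congr rfl hfib] at hcount
    rw [← hcount, ← hL, ← Set.ncard_eq_toFinset_card']
  -- classify the lines through P
  set A : Finset (Set (Projectivization K (Fin 3 → K))) :=
    T.filter (fun ℓ => (ℓ ∩ L).ncard = 1) with hA
  set B : Finset (Set (Projectivization K (Fin 3 → K))) :=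
    T.filter (fun ℓ => (ℓ ∩ L).ncard = q ^ (h - 1) + 1) with hB
  set S : Finset (Set (Projectivization K (Fin 3 → K))) :=
    T.filter (fun ℓ => (ℓ ∩ L).ncard = q + 1 ∧ (ℓ ∩ L).ncard ≠ q ^ (h - 1) + 1) with hS
  have hApow : 1 ≤ q ^ (h - 2) := Nat.one_le_pow _ _ (by omega)
  have hq1 : q ^ (h - 1) = q ^ (h - 2) * q := by
    rw [← pow_succ]; congr 1; omega
  have hq0 : q ^ h = q ^ (h - 1) * q := by
    rw [← pow_succ]; congr 1; omega
  -- goal sets are the coercions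
  have hAset : {ℓ | IsLine ℓ ∧ P ∈ ℓ ∧ (ℓ ∩ L).ncard = 1} = ↑A := by
    ext ℓ
    simp only [hA, Finset.coe_filter, Set.mem_setOf_eq, hmemT]
    tauto
  have hBset : {ℓ | IsLine ℓ ∧ P ∈ ℓ ∧ (ℓ ∩ L).ncard = q ^ (h - 1) + 1} = ↑B := by
    ext ℓ
    simp only [hB, Finset.coe_filter, Set.mem_setOf_eq, hmemT]
    tauto
  -- at most one long secant through P
  have hBle : B.card ≤ 1 := by
    by_contra hc
    push_neg at hc
    obtain ⟨ℓ₁, h1, ℓ₂, h2, hne⟩ := Finset.one_lt_card.1 hc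
    rw [hB, Finset.mem_filter, hmemT] at h1 h2
    exact hP (hsec P ℓ₁ ℓ₂ h1.1.1 h2.1.1 hne h1.2 h2.2 h1.1.2 h2.1.2)
  -- partition of T
  have hdisjAS : Disjoint A S := by
    rw [Finset.disjoint_left]
    intro ℓ hℓA hℓS
    rw [hA, Finset.mem_filter] at hℓA
    rw [hS, Finset.mem_filter] at hℓS
    omega
  have hdisjAB : Disjoint A B := by
    rw [Finset.disjoint_left]
    intro ℓ hℓA hℓB
    rw [hA, Finset.mem_filter] at hℓA
    rw [hB, Finset.mem_filter] at hℓB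
    have : 1 ≤ q ^ (h - 1) := Nat.one_le_pow _ _ (by omega)
    omega
  have hdisjSB : Disjoint S B := by
    rw [Finset.disjoint_left]
    intro ℓ hℓS hℓB
    rw [hS, Finset.mem_filter] at hℓS
    rw [hB, Finset.mem_filter] at hℓB
    exact hℓS.2.2 hℓB.2
  have hcover : T = A ∪ S ∪ B := by
    ext ℓ
    simp only [Finset.mem_union, hA, hS, hB, Finset.mem_filter]
    constructor
    · intro hℓ
      rcases hlines ℓ ((hmemT ℓ).1 hℓ).1 with h1 | h1 | h1
      · exact Or.inl (Or.inl ⟨hℓ, h1⟩)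
      · by_cases h2 : (ℓ ∩ L).ncard = q ^ (h - 1) + 1
        · exact Or.inr ⟨hℓ, h2⟩
        · exact Or.inl (Or.inr ⟨hℓ, h1, h2⟩)
      · exact Or.inr ⟨hℓ, h1⟩
    · rintro ((⟨hℓ, _⟩ | ⟨hℓ, _⟩) | ⟨hℓ, _⟩) <;> exact hℓ
  have hcardsplit : T.card = A.card + S.card + B.card := by
    rw [hcover, Finset.card_union_of_disjoint, Finset.card_union_of_disjoint hdisjAS]
    rw [Finset.disjoint_union_left]
    exact ⟨hdisjAB, hdisjSB⟩
  have hAsum : ∑ ℓ ∈ A, (ℓ ∩ L).ncard = A.card * 1 :=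
    Finset.sum_const_nat (fun ℓ hℓ => by rw [hA, Finset.mem_filter] at hℓ; exact hℓ.2)
  have hSsum : ∑ ℓ ∈ S, (ℓ ∩ L).ncard = S.card * (q + 1) :=
    Finset.sum_const_nat (fun ℓ hℓ => by rw [hS, Finset.mem_filter] at hℓ; exact hℓ.2.1)
  have hBsum : ∑ ℓ ∈ B, (ℓ ∩ L).ncard = B.card * (q ^ (h - 1) + 1) :=
    Finset.sum_const_nat (fun ℓ hℓ => by rw [hB, Finset.mem_filter] at hℓ; exact hℓ.2)
  have hsumsplit : ∑ ℓ ∈ T, (ℓ ∩ L).ncard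
      = A.card * 1 + S.card * (q + 1) + B.card * (q ^ (h - 1) + 1) := by
    rw [hcover, Finset.sum_union (by rw [Finset.disjoint_union_left]; exact ⟨hdisjAB, hdisjSB⟩),
      Finset.sum_union hdisjAS, hAsum, hSsum, hBsum]
  -- the two key linear equations
  have heq1 : A.card + S.card + B.card = q ^ h + 1 := by rw [← hTcard]; exact hcardsplit.symm
  have heq2 : A.card * 1 + S.card * (q + 1) + B.card * (q ^ (h - 1) + 1)
      = q ^ h + q ^ (h - 1) + 1 := by rw [← hsum]; exact hsumsplit.symm
  have hkey : S.card * q + B.card * q ^ (h - 1) = q ^ (h - 1) := by nlinarith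
  -- case analysis on B.card
  have hmain : (B.card = 0 → A.card = q ^ h - q ^ (h - 2) + 1) ∧
      (B.card = 1 → A.card = q ^ h) := by
    constructor
    · intro hB0
      rw [hB0] at heq1 hkey
      have hScard : S.card = q ^ (h - 2) := by
        apply Nat.eq_of_mul_eq_mul_right (show 0 < q by omega)
        rw [← hq1]
        omega
      have hle1 : q ^ (h - 2) ≤ q ^ (h - 1) := by
        rw [hq1]; exact Nat.le_mul_of_pos_right _ (by omega)
      have hle2 : q ^ (h - 1) ≤ q ^ h := by
        rw [hq0]; exact Nat.le_mul_of_pos_right _ (by omega)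
      omega
    · intro hB1
      rw [hB1] at heq1 hkey
      have hScard : S.card = 0 := by
        have : S.card * q = 0 := by omega
        rcases Nat.mul_eq_zero.1 this with h | h
        · exact h
        · omega
      omega
  refine ⟨?_, ?_, ?_⟩
  · rw [hAset, Set.ncard_coe_finset]
    interval_cases hBc : B.card
    · have := hmain.1 rfl
      omega
    · have := hmain.2 rfl
      have hle1 : q ^ (h - 2) ≤ q ^ (h - 1) := by
        rw [hq1]; exact Nat.le_mul_of_pos_right _ (by omega)
      have hle2 : q ^ (h - 1) ≤ q ^ h := by
        rw [hq0]; exact Nat.le_mul_of_pos_right _ (by omega)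
      omega
  · intro hempty
    rw [hBset] at hempty
    have hB0 : B.card = 0 := by
      rw [Finset.card_eq_zero]
      exact_mod_cast Finset.coe_injective (by rw [hempty]; simp)
    rw [hAset, Set.ncard_coe_finset]
    exact hmain.1 hB0
  · intro hone
    rw [hBset, Set.ncard_coe_finset] at hone
    rw [hAset, Set.ncard_coe_finset]
    exact hmain.2 hone
end Main

/-- If `L ⊆ PG(2, q^h)` has `q^h + q^(h-1) + 1` points, every line meets
it in `1`, `q+1`, or `q^(h-1)+1` points, and any point on two distinct
`(q^(h-1)+1)`-secants belongs to `L`, then every point `P ∉ L` lies on at least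
`q^h − q^(h-2) + 1` tangents; exactly `q^h − q^(h-2) + 1` if `P` is on no
`(q^(h-1)+1)`-secant, and exactly `q^h` if `P` is on exactly one. -/
theorem stmt_6 {F K : Type*} [Field F] [Field K] [Algebra F K]
    [Fintype F] [Fintype K]
    (q h : ℕ) (hq : IsPrimePow q) (hcard : Fintype.card F = q)
    (hh : 2 ≤ h) (hrank : Module.finrank F K = h)
    (L : Set (Projectivization K (Fin 3 → K)))
    (hL : L.ncard = q ^ h + q ^ (h - 1) + 1)
    (hlines : ∀ ℓ, IsLine ℓ → (ℓ ∩ L).ncard = 1 ∨ (ℓ ∩ L).ncard = q + 1 ∨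
      (ℓ ∩ L).ncard = q ^ (h - 1) + 1)
    (hsec : ∀ (Q : Projectivization K (Fin 3 → K))
      (ℓ₁ ℓ₂ : Set (Projectivization K (Fin 3 → K))), IsLine ℓ₁ → IsLine ℓ₂ →
      ℓ₁ ≠ ℓ₂ → (ℓ₁ ∩ L).ncard = q ^ (h - 1) + 1 →
      (ℓ₂ ∩ L).ncard = q ^ (h - 1) + 1 → Q ∈ ℓ₁ → Q ∈ ℓ₂ → Q ∈ L)
    (P : Projectivization K (Fin 3 → K)) (hP : P ∉ L) :
    q ^ h - q ^ (h - 2) + 1 ≤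
      {ℓ | IsLine ℓ ∧ P ∈ ℓ ∧ (ℓ ∩ L).ncard = 1}.ncard ∧
    (({ℓ | IsLine ℓ ∧ P ∈ ℓ ∧ (ℓ ∩ L).ncard = q ^ (h - 1) + 1} :
        Set (Set (Projectivization K (Fin 3 → K)))) = ∅ →
      {ℓ | IsLine ℓ ∧ P ∈ ℓ ∧ (ℓ ∩ L).ncard = 1}.ncard
        = q ^ h - q ^ (h - 2) + 1) ∧
    ({ℓ | IsLine ℓ ∧ P ∈ ℓ ∧ (ℓ ∩ L).ncard = q ^ (h - 1) + 1}.ncard = 1 →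
      {ℓ | IsLine ℓ ∧ P ∈ ℓ ∧ (ℓ ∩ L).ncard = 1}.ncard = q ^ h) :=
  stmt_6' q h hq hcard hh hrank L hL hlines hsec P hP
end

section
/- Let q be a prime power, h ≥ 2, let u, v, w ∈ F_{q^h}^3 be linearly independent over F_{q^h}, and let f : F_{q^h} → F_q be a nonzero F_q-linear map. Define U = {x·u + f(x)·v + y·w : x ∈ F_{q^h}, y ∈ F_q}. Then the set L_U = {⟨m⟩_{F_{q^h}} : m ∈ U, m ≠ 0} of projective points spanned by nonzero vectors of U is a blocking set of PG(2, q^h) of size q^h + q^{h-1} + 1. -/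
section Aux
variable {F K : Type*} [Field F] [Field K] [Algebra F K]
variable {u v w : Fin 3 → K}

lemma combo_zero (huvw : LinearIndependent K ![u, v, w]) {a b c : K}
    (h : a • u + b • v + c • w = 0) : a = 0 ∧ b = 0 ∧ c = 0 := by
  have h2 := Fintype.linearIndependent_iff.mp huvw ![a, b, c] ?_
  · exact ⟨h2 0, h2 1, h2 2⟩
  · simpa [Fin.sum_univ_three] using h

lemma combo_inj (huvw : LinearIndependent K ![u, v, w]) {a b c a' b' c' : K}
    (h : a • u + b • v + c • w = a' • u + b' • v + c' • w) :
    a = a' ∧ b = b' ∧ c = c' := by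
  have h0 : (a - a') • u + (b - b') • v + (c - c') • w = 0 := by
    have hs := sub_eq_zero_of_eq h
    rw [← hs]; module
  obtain ⟨h1, h2, h3⟩ := combo_zero huvw h0
  exact ⟨sub_eq_zero.mp h1, sub_eq_zero.mp h2, sub_eq_zero.mp h3⟩

lemma vec_ne (huvw : LinearIndependent K ![u, v, w]) {a b c : K}
    (h : ¬(a = 0 ∧ b = 0 ∧ c = 0)) : a • u + b • v + c • w ≠ 0 :=
  fun h0 => h (combo_zero huvw h0)

variable (u v w)

/-- The linear functional of a line. -/
def lineFun (a : Fin 3 → K) : (Fin 3 → K) →ₗ[K] K where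
  toFun m := ∑ i, a i * m i
  map_add' p q := by simp [mul_add, Finset.sum_add_distrib]
  map_smul' c p := by simp [Finset.mul_sum, mul_left_comm]

variable {u v w} in
/-- Points with last coordinate `1`. -/
noncomputable def funA (huvw : LinearIndependent K ![u, v, w]) (f : K →ₗ[F] F) (x : K) :
    Projectivization K (Fin 3 → K) :=
  Projectivization.mk K (x • u + algebraMap F K (f x) • v + w)
    (by simpa using vec_ne huvw (a := x) (b := algebraMap F K (f x)) (c := (1 : K)) (by simp))

variable {u v w} in
/-- Points with last coordinate `0`, middle coordinate `1`. -/
noncomputable def funB (huvw : LinearIndependent K ![u, v, w]) (x : K) :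
    Projectivization K (Fin 3 → K) :=
  Projectivization.mk K (x • u + v)
    (by simpa using vec_ne huvw (a := x) (b := (1 : K)) (c := (0 : K)) (by simp))

variable {u v w} in
/-- The point spanned by `u`. -/
noncomputable def ptU (huvw : LinearIndependent K ![u, v, w]) :
    Projectivization K (Fin 3 → K) :=
  Projectivization.mk K u
    (by simpa using vec_ne huvw (a := (1 : K)) (b := (0 : K)) (c := (0 : K)) (by simp))

end Aux

section Block

theorem blocking_aux {F K : Type*} [Field F] [Field K] [Algebra F K]
    [Fintype F] [Fintype K]
    (h : ℕ) (hrank : Module.finrank F K = h)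
    (u v w : Fin 3 → K) (huvw : LinearIndependent K ![u, v, w])
    (f : K →ₗ[F] F)
    (a : Fin 3 → K) (ha : a ≠ 0) :
    ∃ (x : K) (y : F), ∃ _ : x • u + algebraMap F K (f x) • v + algebraMap F K y • w ≠ 0,
      lineFun a (x • u + algebraMap F K (f x) • v + algebraMap F K y • w) = 0 := by
  classical
  have halg : Function.Injective (algebraMap F K) := (algebraMap F K).injective
  -- the F-linear parametrization of U
  let T : K × F →ₗ[F] (Fin 3 → K) := {
    toFun := fun p => p.1 • u + algebraMap F K (f p.1) • v + algebraMap F K p.2 • w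
    map_add' := by
      intro p r
      simp only [Prod.fst_add, Prod.snd_add, map_add, add_smul]
      abel
    map_smul' := by
      intro c p
      simp only [Prod.smul_fst, Prod.smul_snd, map_smul, RingHom.id_apply, smul_add,
        smul_eq_mul, map_mul, mul_smul, smul_assoc, algebraMap_smul]
  }
  have hTinj : Function.Injective T := by
    rw [← LinearMap.ker_eq_bot]
    ext p
    simp only [LinearMap.mem_ker, Submodule.mem_bot, T, LinearMap.coe_mk, AddHom.coe_mk]
    constructor
    · intro hp
      obtain ⟨h1, h2, h3⟩ := combo_zero huvw hp
      have : p.2 = 0 := by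
        apply halg; simpa using h3
      exact Prod.ext h1 this
    · rintro rfl; simp
  have hUMrank : Module.finrank F (LinearMap.range T) = h + 1 := by
    rw [LinearMap.finrank_range_of_inj hTinj, Module.finrank_prod, hrank,
      Module.finrank_self]
  -- the line as a submodule
  have hLne : lineFun a ≠ 0 := by
    obtain ⟨i, hi⟩ := Function.ne_iff.mp ha
    intro h0
    apply hi
    have := congrArg (fun g => g (Pi.single i 1)) h0
    simpa [lineFun, Pi.single_apply, Finset.sum_ite_eq'] using this
  have hrangeL : LinearMap.range (lineFun a) = ⊤ := by
    rcases Ideal.eq_bot_or_top (LinearMap.range (lineFun a)) with hb | ht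
    · exact absurd (LinearMap.range_eq_bot.mp hb) hLne
    · exact ht
  have hkerL : Module.finrank K (LinearMap.ker (lineFun a)) = 2 := by
    have := LinearMap.finrank_range_add_finrank_ker (lineFun a)
    rw [hrangeL, finrank_top, Module.finrank_self, Module.finrank_pi,
      Fintype.card_fin] at this
    omega
  have hW : Module.finrank F ((LinearMap.ker (lineFun a)).restrictScalars F) = 2 * h := by
    have e := (Submodule.restrictScalarsEquiv F K (Fin 3 → K)
      (LinearMap.ker (lineFun a))).restrictScalars F
    rw [LinearEquiv.finrank_eq e]
    rw [← Module.finrank_mul_finrank F K (LinearMap.ker (lineFun a)), hrank, hkerL]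
    ring
  -- intersect
  have htot : Module.finrank F (Fin 3 → K) = 3 * h := by
    rw [← Module.finrank_mul_finrank F K (Fin 3 → K), hrank, Module.finrank_pi]
    simp [Fintype.card_fin, mul_comm]
  set W := (LinearMap.ker (lineFun a)).restrictScalars F
  set UM := LinearMap.range T
  have hsum := Submodule.finrank_sup_add_finrank_inf_eq UM W
  have hle : Module.finrank F ↥(UM ⊔ W) ≤ 3 * h := htot ▸ Submodule.finrank_le _
  have hpos : 0 < Module.finrank F ↥(UM ⊓ W) := by
    rw [hUMrank, hW] at hsum
    omega
  have : Nontrivial ↥(UM ⊓ W) := Module.nontrivial_of_finrank_pos hpos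
  obtain ⟨⟨m, hmem⟩, hm0⟩ := exists_ne (0 : ↥(UM ⊓ W))
  have hmne : m ≠ 0 := fun h0 => hm0 (by simp [Subtype.ext_iff, h0])
  obtain ⟨hmU, hmW⟩ := Submodule.mem_inf.mp hmem
  obtain ⟨⟨x, y⟩, rfl⟩ := hmU
  refine ⟨x, y, hmne, ?_⟩
  simpa [W, Submodule.restrictScalars_mem, LinearMap.mem_ker, T] using hmW

end Block

/-- For `u, v, w` linearly independent over `F_{q^h}` and a nonzero
`F_q`-linear `f : F_{q^h} → F_q`, the set of projective points spanned by the nonzero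
vectors of `U = {x·u + f(x)·v + y·w}` is a blocking set of size `q^h + q^(h-1) + 1`. -/
theorem stmt_9 {F K : Type*} [Field F] [Field K] [Algebra F K]
    [Fintype F] [Fintype K]
    (q h : ℕ) (hq : IsPrimePow q) (hcard : Fintype.card F = q)
    (hh : 2 ≤ h) (hrank : Module.finrank F K = h)
    (u v w : Fin 3 → K) (huvw : LinearIndependent K ![u, v, w])
    (f : K →ₗ[F] F) (hf : f ≠ 0)
    (U : Set (Fin 3 → K))
    (hU : U = {m | ∃ (x : K) (y : F),
      m = x • u + algebraMap F K (f x) • v + algebraMap F K y • w})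
    (LU : Set (Projectivization K (Fin 3 → K)))
    (hLU : LU = {P | ∃ m ∈ U, ∃ hm : m ≠ 0, P = Projectivization.mk K m hm}) :
    LU.ncard = q ^ h + q ^ (h - 1) + 1 ∧
    ∀ a : Fin 3 → K, a ≠ 0 → (projLine a ∩ LU).Nonempty := by
  classical
  have hfin : Finite (Projectivization K (Fin 3 → K)) := Quotient.finite _
  have halg : Function.Injective (algebraMap F K) := (algebraMap F K).injective
  subst hU
  subst hLU
  have hcardK : Fintype.card K = q ^ h := by
    rw [Module.card_eq_pow_finrank (K := F) (V := K), hcard, hrank]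
  -- f is surjective
  have hrange : LinearMap.range f = ⊤ := by
    rcases Ideal.eq_bot_or_top (LinearMap.range f) with hb | ht
    · exact absurd (LinearMap.range_eq_bot.mp hb) hf
    · exact ht
  obtain ⟨x₁, hx₁⟩ : ∃ x : K, f x = 1 := by
    have := LinearMap.range_eq_top.mp hrange
    exact this 1
  -- cardinality of the kernel of f
  have hker : Nat.card (LinearMap.ker f) = q ^ (h - 1) := by
    have e : K ≃ (LinearMap.ker f × F) := {
      toFun := fun x => (⟨x - f x • x₁, by
        simp [LinearMap.mem_ker, map_sub, map_smul, hx₁, smul_eq_mul]⟩, f x)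
      invFun := fun p => (p.1 : K) + p.2 • x₁
      left_inv := fun x => by simp
      right_inv := fun p => by
        obtain ⟨⟨k, hk⟩, y⟩ := p
        rw [LinearMap.mem_ker] at hk
        simp [Prod.ext_iff, Subtype.ext_iff, map_add, map_smul, hk, hx₁, smul_eq_mul]
    }
    have h1 : Nat.card K = Nat.card (LinearMap.ker f) * Nat.card F := by
      rw [Nat.card_congr e, Nat.card_prod]
    rw [Nat.card_eq_fintype_card (α := K), hcardK] at h1
    rw [Nat.card_eq_fintype_card (α := F), hcard] at h1
    have h2 := h1
    have hq2 := hq.two_le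
    have hpow : q ^ h = q ^ (h - 1) * q := by
      rw [← pow_succ]
      congr 1
      omega
    rw [hpow] at h2
    exact (Nat.eq_of_mul_eq_mul_right (by omega) h2.symm)
  -- a nonzero element of the kernel of f
  obtain ⟨x₀, hx₀ker, hx₀ne⟩ : ∃ x : K, f x = 0 ∧ x ≠ 0 := by
    have hq2 := hq.two_le
    have hle : q ≤ q ^ (h - 1) := Nat.le_self_pow (by omega) q
    have h2 : 1 < Nat.card (LinearMap.ker f) := by rw [hker]; omega
    have : Nontrivial (LinearMap.ker f) := Finite.one_lt_card_iff_nontrivial.mp h2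
    obtain ⟨⟨x₀, hmem⟩, hne⟩ := exists_ne (0 : LinearMap.ker f)
    refine ⟨x₀, hmem, fun h0 => hne (Subtype.ext h0)⟩
  -- cardinality of the fiber of f over 1
  have hfib : ({x : K | f x = 1} : Set K).ncard = q ^ (h - 1) := by
    rw [← Nat.card_coe_set_eq]
    have e2 : {x : K | f x = 1} ≃ LinearMap.ker f := {
      toFun := fun x => ⟨x.1 - x₁, by
        have hx := x.2
        simp only [Set.mem_setOf_eq] at hx
        simp [LinearMap.mem_ker, map_sub, hx, hx₁]⟩
      invFun := fun k => ⟨k.1 + x₁, by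
        have hk := k.2
        rw [LinearMap.mem_ker] at hk
        simp [Set.mem_setOf_eq, map_add, hk, hx₁]⟩
      left_inv := fun x => by simp
      right_inv := fun k => by simp
    }
    rw [Nat.card_congr e2, hker]
  -- the three pieces
  set A : Set (Projectivization K (Fin 3 → K)) := Set.range (funA huvw f) with hA
  set B : Set (Projectivization K (Fin 3 → K)) := funB huvw '' {x : K | f x = 1} with hB
  set C : Set (Projectivization K (Fin 3 → K)) := {ptU huvw} with hC
  -- the set equality
  have hset : {P | ∃ m ∈ {m | ∃ (x : K) (y : F),
      m = x • u + algebraMap F K (f x) • v + algebraMap F K y • w},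
      ∃ hm : m ≠ 0, P = Projectivization.mk K m hm} = A ∪ B ∪ C := by
    ext P
    constructor
    · rintro ⟨m, ⟨x, y, rfl⟩, hm, rfl⟩
      by_cases hy : y = 0
      · by_cases hfx : f x = 0
        · -- the point is ptU
          have hxne : x ≠ 0 := by
            rintro rfl
            exact hm (by simp [hy, hfx])
          refine Or.inr ?_
          show _ ∈ C
          rw [hC, Set.mem_singleton_iff, ptU, Projectivization.mk_eq_mk_iff']
          exact ⟨x, by simp [hy, hfx]⟩
        · -- the point is in B
          have hne : algebraMap F K (f x) ≠ 0 := fun h0 => hfx (halg (by simpa using h0))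
          refine Or.inl (Or.inr ⟨(algebraMap F K (f x))⁻¹ * x, ?_, ?_⟩)
          · show f _ = 1
            have hrw : (algebraMap F K (f x))⁻¹ * x = (f x)⁻¹ • x := by
              rw [Algebra.smul_def, map_inv₀]
            rw [hrw, map_smul, smul_eq_mul, inv_mul_cancel₀ hfx]
          · rw [funB, Projectivization.mk_eq_mk_iff']
            refine ⟨(algebraMap F K (f x))⁻¹, ?_⟩
            simp only [hy, map_zero, zero_smul, add_zero, smul_add, smul_smul,
              inv_mul_cancel₀ hne, one_smul]
      · -- the point is in A
        have htne : algebraMap F K y ≠ 0 := fun h0 => hy (halg (by simpa using h0))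
        refine Or.inl (Or.inl ⟨(algebraMap F K y)⁻¹ * x, ?_⟩)
        rw [funA, Projectivization.mk_eq_mk_iff']
        refine ⟨(algebraMap F K y)⁻¹, ?_⟩
        have hfx' : algebraMap F K (f ((algebraMap F K y)⁻¹ * x))
            = (algebraMap F K y)⁻¹ * algebraMap F K (f x) := by
          have h1 : (algebraMap F K y)⁻¹ * x = (y⁻¹ : F) • x := by
            rw [Algebra.smul_def, map_inv₀]
          rw [h1, map_smul, smul_eq_mul, map_mul, map_inv₀]
        rw [hfx']
        simp only [smul_add, smul_smul, inv_mul_cancel₀ htne, one_smul]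
    · rintro ((⟨x, rfl⟩ | ⟨x, hx1, rfl⟩) | hP)
      · refine ⟨x • u + algebraMap F K (f x) • v + algebraMap F K (1 : F) • w,
          ⟨x, 1, rfl⟩, by simpa using (vec_ne huvw (a := x) (b := algebraMap F K (f x))
            (c := (1 : K)) (by simp)), ?_⟩
        rw [funA, Projectivization.mk_eq_mk_iff']
        exact ⟨1, by simp⟩
      · refine ⟨x • u + algebraMap F K (f x) • v + algebraMap F K (0 : F) • w,
          ⟨x, 0, rfl⟩, ?_, ?_⟩
        · have hx1' : f x = 1 := hx1
          simpa [hx1'] using (vec_ne huvw (a := x) (b := (1 : K)) (c := (0 : K)) (by simp))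
        · have hx1' : f x = 1 := hx1
          rw [funB, Projectivization.mk_eq_mk_iff']
          exact ⟨1, by simp [hx1']⟩
      · rw [hC, Set.mem_singleton_iff] at hP
        subst hP
        refine ⟨x₀ • u + algebraMap F K (f x₀) • v + algebraMap F K (0 : F) • w,
          ⟨x₀, 0, rfl⟩, ?_, ?_⟩
        · simpa [hx₀ker] using (vec_ne huvw (a := x₀) (b := (0 : K)) (c := (0 : K))
            (by simp [hx₀ne]))
        · rw [ptU, Projectivization.mk_eq_mk_iff']
          exact ⟨x₀⁻¹, by simp [hx₀ker, smul_smul, inv_mul_cancel₀ hx₀ne]⟩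
  -- injectivity and cardinalities
  have hAinj : Function.Injective (funA huvw f) := by
    intro x x' hxx
    rw [funA, funA, Projectivization.mk_eq_mk_iff'] at hxx
    obtain ⟨c, hc⟩ := hxx
    have hc' : (c * x') • u + (c * algebraMap F K (f x')) • v + c • w
        = x • u + algebraMap F K (f x) • v + (1 : K) • w := by
      rw [one_smul]
      simpa only [smul_add, smul_smul] using hc
    obtain ⟨h1, _, h3⟩ := combo_inj huvw hc'
    rw [h3, one_mul] at h1
    exact h1.symm
  have hBinj : Function.Injective (funB huvw) := by
    intro x x' hxx
    rw [funB, funB, Projectivization.mk_eq_mk_iff'] at hxx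
    obtain ⟨c, hc⟩ := hxx
    have hc' : (c * x') • u + (c * 1) • v + (c * 0) • w
        = x • u + (1 : K) • v + (0 : K) • w := by
      simpa only [smul_add, smul_smul, mul_one, mul_zero, zero_smul, add_zero,
        one_smul] using hc
    obtain ⟨h1, h2, _⟩ := combo_inj huvw hc'
    rw [mul_one] at h2
    rw [h2, one_mul] at h1
    exact h1.symm
  have hAcard : A.ncard = q ^ h := by
    rw [hA, ← Set.image_univ, Set.ncard_image_of_injective _ hAinj, Set.ncard_univ,
      Nat.card_eq_fintype_card, hcardK]
  have hBcard : B.ncard = q ^ (h - 1) := by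
    rw [hB, Set.ncard_image_of_injective _ hBinj, hfib]
  have hCcard : C.ncard = 1 := Set.ncard_singleton _
  -- disjointness
  have hAB : Disjoint A B := by
    rw [Set.disjoint_left]
    rintro P ⟨x, rfl⟩ ⟨x', hx', hEq⟩
    rw [funA, funB, Projectivization.mk_eq_mk_iff'] at hEq
    obtain ⟨c, hc⟩ := hEq
    have hc' : (c * x) • u + (c * algebraMap F K (f x)) • v + (c * 1) • w
        = x' • u + (1 : K) • v + (0 : K) • w := by
      simpa only [smul_add, smul_smul, mul_one, mul_zero, zero_smul, add_zero,
        one_smul] using hc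
    obtain ⟨_, _, h3⟩ := combo_inj huvw hc'
    rw [mul_one] at h3
    obtain ⟨_, h2, _⟩ := combo_inj huvw hc'
    rw [h3] at h2
    simp at h2
  have hABC : Disjoint (A ∪ B) C := by
    rw [Set.disjoint_left]
    rintro P (⟨x, rfl⟩ | ⟨x, hx', rfl⟩) hPC <;>
      rw [hC, Set.mem_singleton_iff] at hPC
    · rw [funA, ptU, Projectivization.mk_eq_mk_iff'] at hPC
      obtain ⟨c, hc⟩ := hPC
      have hc' : c • u + (0 : K) • v + (0 : K) • w
          = x • u + algebraMap F K (f x) • v + (1 : K) • w := by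
        simpa using hc
      obtain ⟨_, _, h3⟩ := combo_inj huvw hc'
      simp at h3
    · rw [funB, ptU, Projectivization.mk_eq_mk_iff'] at hPC
      obtain ⟨c, hc⟩ := hPC
      have hc' : c • u + (0 : K) • v + (0 : K) • w
          = x • u + (1 : K) • v + (0 : K) • w := by
        simpa using hc
      obtain ⟨_, h2, _⟩ := combo_inj huvw hc'
      simp at h2
  constructor
  · rw [hset, Set.ncard_union_eq hABC (Set.toFinite _) (Set.toFinite _),
      Set.ncard_union_eq hAB (Set.toFinite _) (Set.toFinite _), hAcard, hBcard, hCcard]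
  · intro a ha
    obtain ⟨x, y, hm, hline⟩ := blocking_aux h hrank u v w huvw f a ha
    refine ⟨Projectivization.mk K _ hm, ?_, ⟨_, ⟨x, y, rfl⟩, hm, rfl⟩⟩
    show ∑ i, a i * (Projectivization.mk K _ hm).rep i = 0
    obtain ⟨c, hc⟩ := Projectivization.exists_smul_eq_mk_rep K _ hm
    rw [← hc]
    have hl : ∑ i, a i * (x • u + algebraMap F K (f x) • v + algebraMap F K y • w) i = 0 :=
      hline
    have hsum : ∑ i, a i * (c • (x • u + algebraMap F K (f x) • v
        + algebraMap F K y • w)) i = (c : K) * ∑ i, a i * (x • u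
        + algebraMap F K (f x) • v + algebraMap F K y • w) i := by
      rw [Finset.mul_sum]
      refine Finset.sum_congr rfl fun i _ => ?_
      simp only [Units.smul_def, Pi.smul_apply, Pi.add_apply, smul_eq_mul, Algebra.smul_def]
      ring
    rw [hsum, hl, mul_zero]
end

section
/- Let q be a prime power, h ≥ 2, and W an (h+1)-dimensional F_q-subspace of V = F_{q^h}^3 such that L_W = {⟨v⟩_{F_{q^h}} : v ∈ W, v ≠ 0} is a blocking set of PG(2, q^h) not containing a line, and L_W contains a point P with dim_{F_q}(W ∩ ⟨P⟩_{F_{q^h}}) = h−1. Then there exists a projectivity of PG(2, q^h) mapping L_W onto {(x : Tr_{q^h/q}(x) : y) : x ∈ F_{q^h}, y ∈ F_q, (x,y) ≠ (0,0)}. -/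
/-! The trace form of `K/F` is nondegenerate, so the `F`-hyperplane `{c | c • m ∈ W}` of `K`
attached to the point `⟨m⟩` of weight `h - 1` is `{c | Tr(δ c) = 0}` for some `δ ≠ 0`. Complete
`W ∩ ⟨m⟩` to `W` by two vectors `w₀, w₁`. As `L_W` is a blocking set containing no line, `W` spans
`K³`, so `m, w₀, w₁` is a `K`-basis, and the projectivity sending it to `(δ,0,0), (x₀,1,0), (0,0,1)`
with `Tr x₀ = 1` maps `W` into `{(x, Tr x, y) : x ∈ K, y ∈ F}`, which has the same `F`-dimension
`h + 1`. -/

open Module Submodule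

theorem Submodule.exists_sup_span_range_eq {F V : Type*} [Field F] [AddCommGroup V] [Module F V]
    {U W : Submodule F V} [FiniteDimensional F W] (hUW : U ≤ W) {n : ℕ}
    (hn : finrank F U + n = finrank F W) :
    ∃ w : Fin n → V, U ⊔ span F (Set.range w) = W := by
  obtain ⟨C, hC⟩ := exists_isCompl (U.comap W.subtype)
  have hCn : finrank F C = n := by
    have := finrank_add_eq_of_isCompl hC
    rw [(comapSubtypeEquivOfLe hUW).finrank_eq] at this
    omega
  let b := finBasisOfFinrankEq F C hCn
  refine ⟨fun i => ((b i : W) : V), ?_⟩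
  have hspan : span F (Set.range fun i => ((b i : W) : V)) = C.map W.subtype := by
    conv_rhs => rw [← map_subtype_top C, ← b.span_eq, ← map_comp, map_span, ← Set.range_comp]
    rfl
  rw [hspan, ← inf_eq_right.2 hUW, ← map_comap_subtype, ← map_sup, hC.sup_eq_top,
    map_subtype_top]

theorem finrank_comap_toSpanSingleton {F K V : Type*} [Field F] [Field K] [Algebra F K]
    [AddCommGroup V] [Module K V] [Module F V] [IsScalarTower F K V] (W : Submodule F V) {m : V}
    (hm : m ≠ 0) :
    finrank F (W.comap ((LinearMap.toSpanSingleton K V m).restrictScalars F)) =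
      finrank F ↥(W ⊓ (span K {m}).restrictScalars F) := by
  let μ := (LinearMap.toSpanSingleton K V m).restrictScalars F
  have hμ : Function.Injective μ := smul_left_injective K hm
  rw [(equivMapOfInjective μ hμ (W.comap μ)).finrank_eq, map_comap_eq, inf_comm,
    LinearMap.range_restrictScalars, ← LinearMap.span_singleton_eq_range]

theorem Module.Dual.exists_ker_inf_ker_le_span_singleton {K V : Type*} [Field K] [AddCommGroup V]
    [Module K V] [FiniteDimensional K V] (hV : finrank K V = 3) {f : Dual K V} (hf : f ≠ 0)
    {q : V} (hq : q ≠ 0) (hfq : f q = 0) :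
    ∃ g : Dual K V, g ≠ 0 ∧ LinearMap.ker f ⊓ LinearMap.ker g ≤ K ∙ q := by
  obtain ⟨r, hr⟩ : ∃ r, f r ≠ 0 := by simpa [DFunLike.ne_iff] using hf
  have hqr : LinearIndependent K ![q, r] := by
    refine LinearIndependent.pair_iff.2 fun s t hst => ?_
    have ht : t = 0 := by simpa [hfq, hr] using congrArg f hst
    subst ht
    simpa [hq] using hst
  have hspan : finrank K (span K {q, r}) = 2 := by
    rw [← Matrix.range_cons_cons_empty q r ![], finrank_span_eq_card hqr, Fintype.card_fin]
  obtain ⟨g, hg, hgqr⟩ := exists_dual_map_eq_bot_of_lt_top (p := span K {q, r})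
    (lt_top_of_finrank_lt_finrank (by omega)) inferInstance
  have hker : span K {q, r} = LinearMap.ker g := by
    refine eq_of_le_of_finrank_eq (LinearMap.le_ker_iff_map.2 hgqr) ?_
    have := g.finrank_ker_add_one_of_ne_zero hg
    omega
  refine ⟨g, hg, fun p hp => ?_⟩
  obtain ⟨hfp, hgp⟩ := hp
  obtain ⟨a, b, rfl⟩ := mem_span_pair.1 (hker ▸ hgp)
  have hb : b = 0 := by simpa [hfq, hr] using hfp
  simp [hb, mem_span_singleton]

theorem exists_linearEquiv_apply_eq {K : Type*} [Field K] {m w₀ w₁ : Fin 3 → K}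
    (hspan : span K {m, w₀, w₁} = ⊤) {δ : K} (hδ : δ ≠ 0) (x₀ : K) :
    ∃ σ : (Fin 3 → K) ≃ₗ[K] (Fin 3 → K),
      σ m = ![δ, 0, 0] ∧ σ w₀ = ![x₀, 1, 0] ∧ σ w₁ = ![0, 0, 1] := by
  -- `σ` will be the coordinate map of this basis.
  let v : Fin 3 → Fin 3 → K := ![δ⁻¹ • m, w₀ - (δ⁻¹ * x₀) • m, w₁]
  have hm : m = δ • v 0 := by simp [v, smul_smul, hδ]
  have hw₀ : w₀ = v 1 + x₀ • v 0 := by simp [v, smul_smul, mul_comm]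
  have hv : ⊤ ≤ span K (Set.range v) := by
    have hv0 : v 0 ∈ span K (Set.range v) := subset_span ⟨0, rfl⟩
    rw [← hspan, span_le]
    rintro _ (rfl | rfl | rfl)
    · rw [hm]; exact smul_mem _ _ hv0
    · rw [hw₀]; exact add_mem (subset_span ⟨1, rfl⟩) (smul_mem _ _ hv0)
    · exact subset_span ⟨2, rfl⟩
  let b := basisOfTopLeSpanOfCardEqFinrank v hv (by simp)
  have hb (i) : b.equivFun (v i) = Pi.single i 1 := by
    have hbv : ⇑b = v := coe_basisOfTopLeSpanOfCardEqFinrank ..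
    rw [← congrFun hbv i, b.equivFun_apply, b.repr_self, Finsupp.single_eq_pi_single]
  refine ⟨b.equivFun, ?_, ?_, ?_⟩
  · rw [hm, map_smul, hb]
    ext i; fin_cases i <;> simp
  · rw [hw₀, map_add, map_smul, hb, hb]
    ext i; fin_cases i <;> simp
  · exact (hb 2).trans (by ext i; fin_cases i <;> simp)

section Trace

variable {F K : Type*} [Field F] [Field K] [Algebra F K]

theorem Tr_eq_algebraMap_trace_s10 [Fintype F] [Finite K] {q h : ℕ}
    (hcard : Fintype.card F = q) (hrank : finrank F K = h) (x : K) :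
    Tr q h x = algebraMap F K (Algebra.trace F K x) := by
  rw [FiniteField.algebraMap_trace_eq_sum_pow, Nat.card_eq_fintype_card, hcard, hrank, Tr]

theorem exists_ne_zero_mem_iff_trace_mul_eq_zero [FiniteDimensional F K] [Algebra.IsSeparable F K]
    (U : Submodule F K) (hU : finrank F U + 1 = finrank F K) :
    ∃ δ : K, δ ≠ 0 ∧ ∀ c, c ∈ U ↔ Algebra.trace F K (δ * c) = 0 := by
  have hUtop : U < ⊤ := by
    refine lt_top_iff_ne_top.2 fun h => ?_
    rw [h, finrank_top] at hU
    omega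
  obtain ⟨ψ, hψ, hψU⟩ := exists_dual_map_eq_bot_of_lt_top hUtop inferInstance
  have hker : U = LinearMap.ker ψ := by
    refine eq_of_le_of_finrank_eq (LinearMap.le_ker_iff_map.2 hψU) ?_
    have := ψ.finrank_ker_add_one_of_ne_zero hψ
    omega
  let B := (Algebra.traceForm F K).toDual (traceForm_nondegenerate F K)
  refine ⟨B.symm ψ, by simpa using hψ, fun c => ?_⟩
  rw [hker, LinearMap.mem_ker, ← Algebra.traceForm_apply, ← LinearMap.BilinForm.toDual_def
    (traceForm_nondegenerate F K), LinearEquiv.apply_symm_apply]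

variable (F K) in
noncomputable def traceEmbedding : K × F →ₗ[F] Fin 3 → K where
  toFun p := ![p.1, algebraMap F K (Algebra.trace F K p.1), algebraMap F K p.2]
  map_add' p p' := by ext i; fin_cases i <;> simp
  map_smul' c p := by ext i; fin_cases i <;> simp <;> simp [Algebra.smul_def]

variable (F K) in
noncomputable def traceSubspace : Submodule F (Fin 3 → K) :=
  LinearMap.range (traceEmbedding F K)

theorem traceEmbedding_apply (x : K) (y : F) :
    traceEmbedding F K (x, y) = ![x, algebraMap F K (Algebra.trace F K x), algebraMap F K y] :=
  rfl

theorem traceEmbedding_injective : Function.Injective (traceEmbedding F K) := by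
  rintro ⟨x, y⟩ ⟨x', y'⟩ h
  have h0 := congrFun h 0
  have h2 := congrFun h 2
  simp only [traceEmbedding_apply] at h0 h2
  simp_all

theorem finrank_traceSubspace [FiniteDimensional F K] :
    finrank F (traceSubspace F K) = finrank F K + 1 := by
  rw [traceSubspace, LinearMap.finrank_range_of_inj traceEmbedding_injective, finrank_prod,
    finrank_self]

end Trace

section LinearSet

variable (K) {F V : Type*} [Field F] [Field K] [AddCommGroup V] [Module K V] [Module F V]

def linearSet (W : Submodule F V) : Set (Projectivization K V) :=
  {P | ∃ m ∈ (W : Set V), ∃ hm : m ≠ 0, P = Projectivization.mk K m hm}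

variable {K}

theorem rep_mem_span_of_mem_linearSet {W : Submodule F V} {P : Projectivization K V}
    (hP : P ∈ linearSet K W) : P.rep ∈ span K (W : Set V) := by
  obtain ⟨m, hmW, hm, rfl⟩ := hP
  obtain ⟨c, hc⟩ := Projectivization.exists_smul_eq_mk_rep K m hm
  rw [← hc]
  exact smul_mem _ _ (subset_span hmW)

theorem image_map_linearSet [Algebra F K] [IsScalarTower F K V] {V' : Type*} [AddCommGroup V']
    [Module K V'] [Module F V'] [IsScalarTower F K V'] (f : V →ₗ[K] V') (hf : Function.Injective f)
    (W : Submodule F V) :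
    Projectivization.map f hf '' linearSet K W = linearSet K (W.map (f.restrictScalars F)) := by
  ext P
  constructor
  · rintro ⟨_, ⟨m, hmW, hm, rfl⟩, rfl⟩
    exact ⟨f m, mem_map_of_mem hmW, _, Projectivization.map_mk ..⟩
  · rintro ⟨_, ⟨m, hmW, rfl⟩, hm, rfl⟩
    have hm' : m ≠ 0 := by rintro rfl; simp at hm
    exact ⟨_, ⟨m, hmW, hm', rfl⟩, Projectivization.map_mk ..⟩

end LinearSet

theorem traceSet_eq_linearSet {F K : Type*} [Field F] [Field K] [Algebra F K] [Fintype F]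
    [Finite K] {q h : ℕ} (hcard : Fintype.card F = q) (hrank : finrank F K = h) :
    traceSet q h F K = linearSet K (traceSubspace F K) := by
  simp only [traceSet, Tr_eq_algebraMap_trace_s10 hcard hrank]
  ext P
  constructor
  · rintro ⟨x, y, -, hv, rfl⟩
    exact ⟨_, ⟨(x, y), rfl⟩, hv, rfl⟩
  · rintro ⟨_, ⟨⟨x, y⟩, rfl⟩, hv, rfl⟩
    refine ⟨x, y, ?_, hv, rfl⟩
    by_contra! h0
    simp [traceEmbedding_apply, h0] at hv

-- If `W` lay in a hyperplane, `L_W` would lie in a line `ℓ ≠ L_W`, and a second line through a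
-- point of `ℓ \ L_W` would miss `L_W`.
theorem span_eq_top_of_blocking {F K : Type*} [Field F] [Field K] [Module F (Fin 3 → K)]
    {W : Submodule F (Fin 3 → K)}
    (hblock : ∀ a : Fin 3 → K, a ≠ 0 → (projLine a ∩ linearSet K W).Nonempty)
    (hnontriv : ∀ ℓ, IsLine ℓ → ¬ ℓ ⊆ linearSet K W) :
    span K (W : Set (Fin 3 → K)) = ⊤ := by
  by_contra hW
  obtain ⟨f, hf, hfW⟩ := exists_dual_map_eq_bot_of_lt_top (lt_top_iff_ne_top.2 hW) inferInstance
  let e := dotProductEquiv K (Fin 3)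
  have he (g : Dual K (Fin 3 → K)) (P) : P ∈ projLine (e.symm g) ↔ g P.rep = 0 := by
    conv_rhs => rw [← e.apply_symm_apply g]
    rfl
  obtain ⟨Q, hQf, hQW⟩ := Set.not_subset.1 (hnontriv _ ⟨e.symm f, by simpa using hf, rfl⟩)
  obtain ⟨g, hg, hfg⟩ := f.exists_ker_inf_ker_le_span_singleton (by simp) hf Q.rep_nonzero
    ((he f Q).1 hQf)
  obtain ⟨P, hPg, hPW⟩ := hblock (e.symm g) (by simpa using hg)
  have hPf : f P.rep = 0 := LinearMap.le_ker_iff_map.2 hfW (rep_mem_span_of_mem_linearSet hPW)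
  obtain ⟨c, hc⟩ := mem_span_singleton.1 (hfg ⟨hPf, (he g P).1 hPg⟩)
  have hPQ : P = Q := by
    rw [← P.mk_rep, ← Q.mk_rep, Projectivization.mk_eq_mk_iff']
    exact ⟨c, hc⟩
  exact hQW (hPQ ▸ hPW)

theorem exists_linearEquiv_map_eq_traceSubspace {F K : Type*} [Field F] [Field K] [Algebra F K]
    [FiniteDimensional F K] [Algebra.IsSeparable F K] {W : Submodule F (Fin 3 → K)}
    (hspan : span K (W : Set (Fin 3 → K)) = ⊤) (hW : finrank F W = finrank F K + 1)
    {m : Fin 3 → K} (hm : m ≠ 0)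
    (hwt : finrank F ↥(W ⊓ (span K {m}).restrictScalars F) + 1 = finrank F K) :
    ∃ σ : (Fin 3 → K) ≃ₗ[K] (Fin 3 → K),
      W.map (σ.toLinearMap.restrictScalars F) = traceSubspace F K := by
  obtain ⟨δ, hδ, hδW⟩ := exists_ne_zero_mem_iff_trace_mul_eq_zero
    (W.comap ((LinearMap.toSpanSingleton K _ m).restrictScalars F))
    (by rw [finrank_comap_toSpanSingleton W hm, hwt])
  obtain ⟨x₀, hx₀⟩ := Algebra.trace_surjective F K 1
  obtain ⟨w, hUw⟩ := exists_sup_span_range_eq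
    (inf_le_left (a := W) (b := (span K {m}).restrictScalars F)) (n := 2) (by omega)
  have hspan' : span K {m, w 0, w 1} = ⊤ := by
    rw [eq_top_iff, ← hspan, span_le]
    show W ≤ (span K {m, w 0, w 1}).restrictScalars F
    rw [← hUw]
    refine sup_le (inf_le_right.trans (restrictScalars_mono F (span_mono (by simp)))) ?_
    refine span_le.2 (Set.range_subset_iff.2 fun i => ?_)
    fin_cases i <;> exact subset_span (by simp)
  obtain ⟨σ, hσm, hσ₀, hσ₁⟩ := exists_linearEquiv_apply_eq hspan' hδ x₀
  have hle : W.map (σ.toLinearMap.restrictScalars F) ≤ traceSubspace F K := by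
    rw [← hUw, Submodule.map_sup, sup_le_iff, map_span, span_le]
    constructor
    · rintro _ ⟨u, ⟨huW, hum⟩, rfl⟩
      obtain ⟨c, rfl⟩ := mem_span_singleton.1 hum
      refine ⟨(δ * c, 0), ?_⟩
      have hc : Algebra.trace F K (δ * c) = 0 := (hδW c).1 huW
      ext i; fin_cases i <;> simp [traceEmbedding_apply, hc, hσm, mul_comm]
    · rintro _ ⟨_, ⟨i, rfl⟩, rfl⟩
      fin_cases i
      · exact ⟨(x₀, 0), by ext i; fin_cases i <;> simp [traceEmbedding_apply, hx₀, hσ₀]⟩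
      · exact ⟨(0, 1), by ext i; fin_cases i <;> simp [traceEmbedding_apply, hσ₁]⟩
  refine ⟨σ, eq_of_le_of_finrank_eq hle ?_⟩
  rw [finrank_traceSubspace, ← hW]
  exact (equivMapOfInjective (σ.toLinearMap.restrictScalars F) σ.injective W).finrank_eq.symm

theorem stmt_10_general {F K : Type*} [Field F] [Field K] [Algebra F K]
    [Fintype F] [Fintype K]
    (q h : ℕ) (hcard : Fintype.card F = q)
    (hrank : Module.finrank F K = h)
    (W : Submodule F (Fin 3 → K)) (hW : Module.finrank F W = h + 1)
    (L : Set (Projectivization K (Fin 3 → K)))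
    (hL : L = {P | ∃ m ∈ (W : Set (Fin 3 → K)), ∃ hm : m ≠ 0,
      P = Projectivization.mk K m hm})
    (hblock : ∀ a : Fin 3 → K, a ≠ 0 → (projLine a ∩ L).Nonempty)
    (hnontriv : ∀ ℓ : Set (Projectivization K (Fin 3 → K)), IsLine ℓ → ¬ ℓ ⊆ L)
    (hweight : ∃ (m : Fin 3 → K) (hm : m ≠ 0), Projectivization.mk K m hm ∈ L ∧
      Module.finrank F
        ↥(W ⊓ (Submodule.span K {m}).restrictScalars F) = h - 1) :
    ∃ σ : (Fin 3 → K) ≃ₗ[K] (Fin 3 → K),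
      Projectivization.map σ.toLinearMap σ.injective '' L = traceSet q h F K := by
  obtain rfl : L = linearSet K W := hL
  obtain ⟨m, hm, -, hwt⟩ := hweight
  have hpos : 0 < h := hrank ▸ finrank_pos
  obtain ⟨σ, hσ⟩ := exists_linearEquiv_map_eq_traceSubspace
    (span_eq_top_of_blocking hblock hnontriv) (hrank ▸ hW) hm (by omega)
  exact ⟨σ, by rw [image_map_linearSet, hσ, traceSet_eq_linearSet hcard hrank]⟩

/-- An `(h+1)`-dimensional `F_q`-subspace `W` of `F_{q^h}³` defining a
nontrivial blocking set `L_W` with a point of weight `h−1` gives a set projectively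
equivalent to the trace construction. -/
theorem stmt_10 {F K : Type*} [Field F] [Field K] [Algebra F K]
    [Fintype F] [Fintype K]
    (q h : ℕ) (hq : IsPrimePow q) (hcard : Fintype.card F = q)
    (hh : 2 ≤ h) (hrank : Module.finrank F K = h)
    (W : Submodule F (Fin 3 → K)) (hW : Module.finrank F W = h + 1)
    (L : Set (Projectivization K (Fin 3 → K)))
    (hL : L = {P | ∃ m ∈ (W : Set (Fin 3 → K)), ∃ hm : m ≠ 0,
      P = Projectivization.mk K m hm})
    (hblock : ∀ a : Fin 3 → K, a ≠ 0 → (projLine a ∩ L).Nonempty)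
    (hnontriv : ∀ ℓ : Set (Projectivization K (Fin 3 → K)), IsLine ℓ → ¬ ℓ ⊆ L)
    (hweight : ∃ (m : Fin 3 → K) (hm : m ≠ 0), Projectivization.mk K m hm ∈ L ∧
      Module.finrank F
        ↥(W ⊓ (Submodule.span K {m}).restrictScalars F) = h - 1) :
    ∃ σ : (Fin 3 → K) ≃ₗ[K] (Fin 3 → K),
      Projectivization.map σ.toLinearMap σ.injective '' L = traceSet q h F K :=
  stmt_10_general q h hcard hrank W hW L hL hblock hnontriv hweight
end

section
/- Let q be a prime power, h ≥ 2, f, g : F_{q^h} → F_q nonzero F_q-linear maps, and α ∈ F_{q^h} \ F_q. Suppose (1) g(1) = g(α) = 1, (2) f(1/α) ≠ 0, and (3) f((k−1)/(k(k−1)α − k²)) ≠ 1 for all k ∈ F_q with k ≠ 0, 1. Then the sets L = {(x : f(x) : y) : x ∈ F_{q^h}, y ∈ F_q, (x,y) ≠ (0,0)} and L' = {(y' : x' : g(x') + y'α) : x' ∈ F_{q^h}, y' ∈ F_q, (x',y') ≠ (0,0)} are disjoint subsets of PG(2, q^h). -/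
/-!
A common point of `L` and `L'` has both `y ≠ 0` and `y' ≠ 0` (for `y` this uses that `1, α` are
`F`-independent), so after scaling it is `(u : f u : 1) = (1 : v : g v + α)`. With `k = f u` and
`s = g v` this says `u (s + α) = 1` and `v = k (s + α)`; applying `g` and (1) gives `s = k (s + 1)`.
Hence `k ≠ 1`; `k = 0` forces `s = 0` and `u = 1/α`, against (2); otherwise
`k (k - 1) α - k² = k (k - 1) (s + α)`, so the argument of `f` in (3) is `u / k`, of `f`-value `1`.
-/

section

variable {F K : Type*} [Field F] [Field K] [Algebra F K]

theorem eq_zero_of_algebraMap_mul_add_eq_zero {α : K} (hα : α ∉ Set.range (algebraMap F K))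
    {a b : F} (h : algebraMap F K b * α + algebraMap F K a = 0) : b = 0 := by
  by_contra hb
  refine hα ⟨-a / b, ?_⟩
  have hb' : algebraMap F K b ≠ 0 := (map_ne_zero _).2 hb
  rw [map_div₀, map_neg, div_eq_iff hb']
  linear_combination -h

-- `hu` and `huv` say that the points `(u : f u : 1)` and `(1 : v : g v + α)` coincide.
theorem false_of_affine_meet (f g : K →ₗ[F] F) (α : K)
    (h1 : g 1 = 1 ∧ g α = 1)
    (h2 : f (1 / α) ≠ 0)
    (h3 : ∀ k : F, k ≠ 0 → k ≠ 1 →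
      f ((algebraMap F K k - 1) /
        (algebraMap F K k * (algebraMap F K k - 1) * α - algebraMap F K k ^ 2)) ≠ 1)
    {u v : K} (hu : u * (algebraMap F K (g v) + α) = 1)
    (huv : algebraMap F K (f u) * (algebraMap F K (g v) + α) = v) : False := by
  set k := f u
  set s := g v
  have hs : s = k * (s + 1) := by
    have := congrArg g huv
    rwa [← Algebra.smul_def, map_smul, map_add, Algebra.algebraMap_eq_smul_one, map_smul,
      h1.1, h1.2, smul_eq_mul, smul_eq_mul, mul_one, eq_comm] at this
  have hk1 : k ≠ 1 := by
    rintro hk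
    rw [hk] at hs
    exact one_ne_zero (by linear_combination -hs : (1 : F) = 0)
  have hk0 : k ≠ 0 := by
    rintro hk
    have hs0 : s = 0 := by rw [hs, hk, zero_mul]
    rw [hs0, map_zero, zero_add] at hu
    exact h2 (by rw [← eq_one_div_of_mul_eq_one_left hu]; exact hk)
  apply h3 k hk0 hk1
  have hsα : algebraMap F K s + α ≠ 0 := right_ne_zero_of_mul_eq_one hu
  have hk0' : algebraMap F K k ≠ 0 := (map_ne_zero _).2 hk0
  have hk1' : algebraMap F K k - 1 ≠ 0 :=
    sub_ne_zero.2 ((map_ne_one_iff _ (algebraMap F K).injective).2 hk1)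
  have hsK : algebraMap F K s = algebraMap F K k * (algebraMap F K s + 1) := by
    rw [← map_one (algebraMap F K), ← map_add, ← map_mul, ← hs]
  have hden : algebraMap F K k * (algebraMap F K k - 1) * α - algebraMap F K k ^ 2
      = algebraMap F K k * (algebraMap F K k - 1) * (algebraMap F K s + α) := by
    linear_combination (algebraMap F K k) * hsK
  have hfrac : (algebraMap F K k - 1) /
      (algebraMap F K k * (algebraMap F K k - 1) * α - algebraMap F K k ^ 2) = k⁻¹ • u := by
    rw [hden, Algebra.smul_def, map_inv₀, eq_one_div_of_mul_eq_one_left hu]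
    field_simp
  rw [hfrac, map_smul, smul_eq_mul, inv_mul_cancel₀ hk0]

theorem exists_affine_of_mk_eq_mk (f g : K →ₗ[F] F) {α : K}
    (hα : α ∉ Set.range (algebraMap F K)) {x x' : K} {y y' : F} (hxy' : x' ≠ 0 ∨ y' ≠ 0)
    {hv : (![x, algebraMap F K (f x), algebraMap F K y] : Fin 3 → K) ≠ 0}
    {hv' : (![algebraMap F K y', x', algebraMap F K (g x') + algebraMap F K y' * α] :
      Fin 3 → K) ≠ 0}
    (hP : Projectivization.mk K _ hv = Projectivization.mk K _ hv') :
    ∃ u v : K, u * (algebraMap F K (g v) + α) = 1 ∧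
      algebraMap F K (f u) * (algebraMap F K (g v) + α) = v := by
  obtain ⟨c, hc⟩ := (Projectivization.mk_eq_mk_iff' K _ _ hv hv').1 hP
  have e0 : c * algebraMap F K y' = x := by simpa using congrFun hc 0
  have e1 : c * x' = algebraMap F K (f x) := by simpa using congrFun hc 1
  have e2 : c * (algebraMap F K (g x') + algebraMap F K y' * α) = algebraMap F K y := by
    simpa using congrFun hc 2
  have hc0 : c ≠ 0 := by
    rintro rfl
    exact hv (by rw [← hc, zero_smul])
  have hy' : y' ≠ 0 := by
    rintro rfl
    rw [map_zero, mul_zero, eq_comm] at e0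
    rw [e0, map_zero, map_zero, mul_eq_zero] at e1
    exact hxy'.elim (fun hx' => hx' (e1.resolve_left hc0)) (· rfl)
  have hy : y ≠ 0 := by
    rintro rfl
    rw [map_zero, mul_eq_zero] at e2
    exact hy' (eq_zero_of_algebraMap_mul_add_eq_zero hα (a := g x')
      (by linear_combination e2.resolve_left hc0))
  have hinv (φ : K →ₗ[F] F) (a : F) (z : K) :
      algebraMap F K (φ (a⁻¹ • z)) = (algebraMap F K a)⁻¹ * algebraMap F K (φ z) := by
    rw [map_smul, smul_eq_mul, map_mul, map_inv₀]
  have hyK := (map_ne_zero (algebraMap F K)).2 hy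
  have hyK' := (map_ne_zero (algebraMap F K)).2 hy'
  refine ⟨y⁻¹ • x, y'⁻¹ • x', ?_, ?_⟩
  · rw [hinv, Algebra.smul_def, map_inv₀]
    field_simp
    linear_combination
      algebraMap F K y' * e2 - (algebraMap F K (g x') + algebraMap F K y' * α) * e0
  · rw [hinv, hinv, Algebra.smul_def, map_inv₀]
    field_simp
    linear_combination x' * e2 - (algebraMap F K (g x') + algebraMap F K y' * α) * e1

end

theorem stmt_11_general {F K : Type*} [Field F] [Field K] [Algebra F K]
    (f g : K →ₗ[F] F)
    (α : K) (hα : α ∉ Set.range (algebraMap F K))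
    (h1 : g 1 = 1 ∧ g α = 1)
    (h2 : f (1 / α) ≠ 0)
    (h3 : ∀ k : F, k ≠ 0 → k ≠ 1 →
      f ((algebraMap F K k - 1) /
        (algebraMap F K k * (algebraMap F K k - 1) * α - algebraMap F K k ^ 2)) ≠ 1)
    (L L' : Set (Projectivization K (Fin 3 → K)))
    (hL : L = {P | ∃ (x : K) (y : F), (x ≠ 0 ∨ y ≠ 0) ∧
      ∃ hv : (![x, algebraMap F K (f x), algebraMap F K y] : Fin 3 → K) ≠ 0,
        P = Projectivization.mk K (![x, algebraMap F K (f x), algebraMap F K y]) hv})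
    (hL' : L' = {P | ∃ (x' : K) (y' : F), (x' ≠ 0 ∨ y' ≠ 0) ∧
      ∃ hv : (![algebraMap F K y', x',
          algebraMap F K (g x') + algebraMap F K y' * α] : Fin 3 → K) ≠ 0,
        P = Projectivization.mk K
          (![algebraMap F K y', x', algebraMap F K (g x') + algebraMap F K y' * α]) hv}) :
    Disjoint L L' := by
  rw [hL, hL', Set.disjoint_left]
  rintro P ⟨x, y, -, hv, rfl⟩ ⟨x', y', hxy', hv', hP⟩
  obtain ⟨u, v, hu, huv⟩ := exists_affine_of_mk_eq_mk f g hα hxy' hP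
  exact false_of_affine_meet f g α h1 h2 h3 hu huv

/-- Under conditions (1)–(3) on `f, g, α`, the R\'edei-type blocking
sets `L = {(x : f(x) : y)}` and `L' = {(y' : x' : g(x') + y'α)}` are disjoint. -/
theorem stmt_11 {F K : Type*} [Field F] [Field K] [Algebra F K]
    [Fintype F] [Fintype K]
    (q h : ℕ) (hq : IsPrimePow q) (hcard : Fintype.card F = q)
    (hh : 2 ≤ h) (hrank : Module.finrank F K = h)
    (f g : K →ₗ[F] F) (hf : f ≠ 0) (hg : g ≠ 0)
    (α : K) (hα : α ∉ Set.range (algebraMap F K))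
    (h1 : g 1 = 1 ∧ g α = 1)
    (h2 : f (1 / α) ≠ 0)
    (h3 : ∀ k : F, k ≠ 0 → k ≠ 1 →
      f ((algebraMap F K k - 1) /
        (algebraMap F K k * (algebraMap F K k - 1) * α - algebraMap F K k ^ 2)) ≠ 1)
    (L L' : Set (Projectivization K (Fin 3 → K)))
    (hL : L = {P | ∃ (x : K) (y : F), (x ≠ 0 ∨ y ≠ 0) ∧
      ∃ hv : (![x, algebraMap F K (f x), algebraMap F K y] : Fin 3 → K) ≠ 0,
        P = Projectivization.mk K (![x, algebraMap F K (f x), algebraMap F K y]) hv})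
    (hL' : L' = {P | ∃ (x' : K) (y' : F), (x' ≠ 0 ∨ y' ≠ 0) ∧
      ∃ hv : (![algebraMap F K y', x',
          algebraMap F K (g x') + algebraMap F K y' * α] : Fin 3 → K) ≠ 0,
        P = Projectivization.mk K
          (![algebraMap F K y', x', algebraMap F K (g x') + algebraMap F K y' * α]) hv}) :
    Disjoint L L' :=
  stmt_11_general f g α hα h1 h2 h3 L L' hL hL'
end

section
/- Let q be a prime power, h ≥ 2, and f : F_{q^h} → F_q a nonzero F_q-linear map. Then there exist α ∈ F_{q^h} \ F_q and a nonzero F_q-linear map g : F_{q^h} → F_q such that g(1) = g(α) = 1, f(1/α) ≠ 0, and f((k−1)/(k(k−1)α − k²)) ≠ 1 for every k ∈ F_q with k ≠ 0,1. In particular, the number of α ∈ F_{q^h} \ F_q satisfying the conditions on f is at least q^{h-1} − q + 1 > 0. -/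
/-!
An element α fails the conditions only if α ∈ F_q (q elements), or 1/α lies in the hyperplane
ker f (q^(h-1) elements, among them α = 0), or, for one of the q - 2 values of k, the Möbius
image (k-1)/(k(k-1)α - k²) lies in the fibre f⁻¹(1); each such Möbius map is injective and each
fibre of f has q^(h-1) elements. Hence at most q^h - q^(h-1) + q - 1 elements fail. For α ∉ F_q
the element 1 is not a multiple of α - 1, so some functional kills α - 1 and sends 1 to 1.
-/

open Set Module Pointwise

theorem Module.Dual.ncard_preimage_singleton {F V : Type*} [Field F] [AddCommGroup V]
    [Module F V] [FiniteDimensional F V] {f : Dual F V} (hf : f ≠ 0) (c : F) :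
    (f ⁻¹' {c}).ncard = Nat.card F ^ (finrank F V - 1) := by
  obtain ⟨x, rfl⟩ := LinearMap.surjective hf c
  have hfiber : f ⁻¹' {f x} = (x + ·) '' (LinearMap.ker f : Set V) := by
    ext y
    refine ⟨fun hy => ⟨y - x, by simp_all, by simp⟩, ?_⟩
    rintro ⟨z, hz, rfl⟩
    simp_all
  rw [hfiber, ncard_image_of_injective _ (add_right_injective x), ← Nat.card_coe_set_eq,
    SetLike.coe_sort_coe, natCard_eq_pow_finrank (K := F),
    ← Dual.finrank_ker_add_one_of_ne_zero hf, Nat.add_sub_cancel]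

/-- The pole `a * x = b` is no exception: there `c / 0 = 0`, which no other `x` reaches. -/
theorem div_mul_sub_injective {K : Type*} [Field K] {a b c : K} (ha : a ≠ 0) (hc : c ≠ 0) :
    Function.Injective fun x : K => c / (a * x - b) := by
  intro x y hxy
  simpa [div_eq_mul_inv, hc, ha, sub_left_inj] using hxy

theorem exists_dual_apply_one_eq_one_and_apply_eq_one {F K : Type*} [Field F] [Ring K]
    [Nontrivial K] [Algebra F K] {α : K} (hα : α ∉ range (algebraMap F K)) :
    ∃ g : Dual F K, g 1 = 1 ∧ g α = 1 := by
  have hone : (1 : K) ∉ F ∙ (α - 1) := by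
    rw [Submodule.mem_span_singleton]
    rintro ⟨c, hc⟩
    have hc0 : c ≠ 0 := by rintro rfl; simp at hc
    have hα1 : α - 1 = c⁻¹ • 1 := by rw [← inv_smul_smul₀ hc0 (α - 1), hc]
    refine hα ⟨1 + c⁻¹, ?_⟩
    rw [map_add, map_one, Algebra.algebraMap_eq_smul_one, ← hα1]
    abel
  obtain ⟨g, hg1, hker⟩ := Submodule.exists_dual_map_eq_bot_of_notMem hone inferInstance
  have hgα : g (α - 1) = 0 := by
    simpa [hker] using
      Submodule.mem_map_of_mem (f := g) (Submodule.mem_span_singleton_self (α - 1))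
  refine ⟨(g 1)⁻¹ • g, inv_mul_cancel₀ hg1, ?_⟩
  rw [map_sub, sub_eq_zero] at hgα
  simp [hgα, inv_mul_cancel₀ hg1]

section Counting

variable {F K : Type*} [Field F] [Field K] [Algebra F K]

def admissibleSet (f : Dual F K) : Set K :=
  {α : K | α ∉ range (algebraMap F K) ∧ f (1 / α) ≠ 0 ∧
    ∀ k : F, k ≠ 0 → k ≠ 1 →
      f ((algebraMap F K k - 1) /
        (algebraMap F K k * (algebraMap F K k - 1) * α - algebraMap F K k ^ 2)) ≠ 1}

theorem compl_admissibleSet_subset [DecidableEq F] [Fintype F] (f : Dual F K) :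
    (admissibleSet f)ᶜ ⊆ (range (algebraMap F K) ∪ (f ⁻¹' {0})⁻¹) ∪
      ⋃ k ∈ ({0, 1} : Finset F)ᶜ, {α : K | f ((algebraMap F K k - 1) /
        (algebraMap F K k * (algebraMap F K k - 1) * α - algebraMap F K k ^ 2)) = 1} := by
  intro α hα
  simp only [admissibleSet, mem_compl_iff, mem_ofPred_eq, not_and_or, not_not, not_forall] at hα
  simp only [mem_union, mem_iUnion, Finset.mem_compl, Finset.mem_insert, Finset.mem_singleton,
    not_or, mem_ofPred_eq, ← one_div]
  aesop

variable [Finite K] {f : Dual F K}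

theorem ncard_range_algebraMap_union_inv_ker_add_one_le (hf : f ≠ 0) :
    (range (algebraMap F K) ∪ (f ⁻¹' {0})⁻¹).ncard + 1 ≤
      Nat.card F + Nat.card F ^ (finrank F K - 1) := by
  have hzero : (range (algebraMap F K) ∩ (f ⁻¹' {0})⁻¹).Nonempty := ⟨0, ⟨0, map_zero _⟩, by simp⟩
  have hinter := (ncard_pos (toFinite _)).2 hzero
  have hunion := ncard_union_add_ncard_inter (range (algebraMap F K)) (f ⁻¹' {0})⁻¹
  rw [ncard_range_of_injective (algebraMap F K).injective, ncard_inv,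
    Dual.ncard_preimage_singleton hf] at hunion
  omega

theorem ncard_setOf_apply_div_eq_one_le (hf : f ≠ 0) {k : F} (hk0 : k ≠ 0) (hk1 : k ≠ 1) :
    {α : K | f ((algebraMap F K k - 1) /
      (algebraMap F K k * (algebraMap F K k - 1) * α - algebraMap F K k ^ 2)) = 1}.ncard ≤
      Nat.card F ^ (finrank F K - 1) := by
  have hk0' : algebraMap F K k ≠ 0 := by simpa using hk0
  have hk1' : algebraMap F K k - 1 ≠ 0 := by simpa [sub_eq_zero] using hk1
  rw [← Dual.ncard_preimage_singleton hf 1]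
  exact ncard_le_ncard_of_injOn _ (fun α hα => hα)
    (div_mul_sub_injective (mul_ne_zero hk0' hk1') hk1').injOn

theorem ncard_compl_admissibleSet_add_one_le (hf : f ≠ 0) :
    (admissibleSet f)ᶜ.ncard + 1 ≤ Nat.card F + Nat.card F ^ (finrank F K - 1) +
      (Nat.card F - 2) * Nat.card F ^ (finrank F K - 1) := by
  classical
  have : Finite F := Finite.of_injective _ (algebraMap F K).injective
  have := Fintype.ofFinite F
  have hT : (({0, 1} : Finset F)ᶜ).card = Nat.card F - 2 := by
    rw [Finset.card_compl, Finset.card_pair zero_ne_one, Fintype.card_eq_nat_card]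
  calc (admissibleSet f)ᶜ.ncard + 1
      ≤ (range (algebraMap F K) ∪ (f ⁻¹' {0})⁻¹).ncard + 1 +
          ∑ k ∈ ({0, 1} : Finset F)ᶜ, {α : K | f ((algebraMap F K k - 1) /
            (algebraMap F K k * (algebraMap F K k - 1) * α - algebraMap F K k ^ 2)) = 1}.ncard := by
        grw [ncard_le_ncard (compl_admissibleSet_subset f), ncard_union_le,
          Finset.set_ncard_biUnion_le]
        omega
    _ ≤ Nat.card F + Nat.card F ^ (finrank F K - 1) +
          ∑ _k ∈ ({0, 1} : Finset F)ᶜ, Nat.card F ^ (finrank F K - 1) := by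
        refine add_le_add (ncard_range_algebraMap_union_inv_ker_add_one_le hf)
          (Finset.sum_le_sum fun k hk => ?_)
        simp only [Finset.mem_compl, Finset.mem_insert, Finset.mem_singleton, not_or] at hk
        exact ncard_setOf_apply_div_eq_one_le hf hk.1 hk.2
    _ = _ := by rw [Finset.sum_const, hT, smul_eq_mul]

theorem le_ncard_admissibleSet (hf : f ≠ 0) :
    (Nat.card F : ℤ) ^ (finrank F K - 1) - Nat.card F + 1 ≤ (admissibleSet f).ncard := by
  have : Finite F := Finite.of_injective _ (algebraMap F K).injective
  have hq : 2 ≤ Nat.card F := Finite.one_lt_card_iff_nontrivial.2 inferInstance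
  have hn : finrank F K = finrank F K - 1 + 1 := by
    have := Dual.finrank_ker_add_one_of_ne_zero hf
    omega
  have htotal := ncard_add_ncard_compl (admissibleSet f)
  rw [natCard_eq_pow_finrank (K := F), hn, pow_succ] at htotal
  have hcompl := ncard_compl_admissibleSet_add_one_le hf
  zify [hq] at htotal hcompl
  linarith

end Counting

theorem stmt_12_general {F K : Type*} [Field F] [Field K] [Algebra F K]
    [Fintype F] [Fintype K]
    (q h : ℕ) (hcard : Fintype.card F = q)
    (hh : 2 ≤ h) (hrank : Module.finrank F K = h)
    (f : K →ₗ[F] F) (hf : f ≠ 0)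
    (A : Set K)
    (hA : A = {α : K | α ∉ Set.range (algebraMap F K) ∧ f (1 / α) ≠ 0 ∧
      ∀ k : F, k ≠ 0 → k ≠ 1 →
        f ((algebraMap F K k - 1) /
          (algebraMap F K k * (algebraMap F K k - 1) * α - algebraMap F K k ^ 2)) ≠ 1}) :
    (∃ α ∈ A, ∃ g : K →ₗ[F] F, g ≠ 0 ∧ g 1 = 1 ∧ g α = 1) ∧
    (q : ℤ) ^ (h - 1) - q + 1 ≤ A.ncard ∧
    (0 : ℤ) < (q : ℤ) ^ (h - 1) - q + 1 := by
  obtain rfl : A = admissibleSet f := hA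
  subst hcard hrank
  have hbound := le_ncard_admissibleSet hf
  rw [Nat.card_eq_fintype_card] at hbound
  have hpos : (0 : ℤ) < (Fintype.card F : ℤ) ^ (finrank F K - 1) - Fintype.card F + 1 := by
    have : (Fintype.card F : ℤ) ≤ (Fintype.card F : ℤ) ^ (finrank F K - 1) :=
      le_self_pow₀ (by exact_mod_cast Fintype.card_pos) (by omega)
    linarith
  obtain ⟨α, hα⟩ : (admissibleSet f).Nonempty :=
    (ncard_pos (toFinite _)).1 (by exact_mod_cast hpos.trans_le hbound)
  obtain ⟨g, hg1, hgα⟩ := exists_dual_apply_one_eq_one_and_apply_eq_one hα.1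
  exact ⟨⟨α, hα, g, fun hg => by simp [hg] at hg1, hg1, hgα⟩, hbound, hpos⟩

/-- For any nonzero `F_q`-linear `f : F_{q^h} → F_q` there exist
`α ∈ F_{q^h} \ F_q` and a nonzero `F_q`-linear `g` with `g(1) = g(α) = 1` such that
`f(1/α) ≠ 0` and `f((k−1)/(k(k−1)α − k²)) ≠ 1` for all `k ∈ F_q \ {0,1}`; moreover the
number of suitable `α` is at least `q^(h-1) − q + 1 > 0`. -/
theorem stmt_12 {F K : Type*} [Field F] [Field K] [Algebra F K]
    [Fintype F] [Fintype K]
    (q h : ℕ) (hq : IsPrimePow q) (hcard : Fintype.card F = q)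
    (hh : 2 ≤ h) (hrank : Module.finrank F K = h)
    (f : K →ₗ[F] F) (hf : f ≠ 0)
    (A : Set K)
    (hA : A = {α : K | α ∉ Set.range (algebraMap F K) ∧ f (1 / α) ≠ 0 ∧
      ∀ k : F, k ≠ 0 → k ≠ 1 →
        f ((algebraMap F K k - 1) /
          (algebraMap F K k * (algebraMap F K k - 1) * α - algebraMap F K k ^ 2)) ≠ 1}) :
    (∃ α ∈ A, ∃ g : K →ₗ[F] F, g ≠ 0 ∧ g 1 = 1 ∧ g α = 1) ∧
    (q : ℤ) ^ (h - 1) - q + 1 ≤ A.ncard ∧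
    (0 : ℤ) < (q : ℤ) ^ (h - 1) - q + 1 :=
  stmt_12_general q h hcard hh hrank f hf A hA
end
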